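/- arXiv:1504.05432 — 4 statements merged into one kernel-verified Lean document; each statement's English description precedes it below -/
import Mathlib

section
/- Let A(u₁,u₂) be a homogeneous real-valued polynomial of degree m in (u₁,ū₁,u₂,ū₂), i.e. A(u₁,u₂) = Σ_{|α|+|β|=m, |α|>0, |β|>0} b_{α,β} u'^α ū'^β with at least one coefficient b_{α,β} ≠ 0 (where all appearing multi-indices satisfy |α|>0 and |β|>0). Then there exists h ∈ ℂ such that the one-variable polynomial z ↦ A(hz, z), viewed as a polynomial in z and z̄, has a nonzero mixed coefficient, i.e. ∂^m A(hz,z)/∂z^j ∂z̄^k (0) ≠ 0 for some j,k > 0 with j+k = m. -/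
/-!
Pick `b α₀ β₀ ≠ 0` and put `j = |α₀|`, `k = |β₀|`. As a function of `h`, the `(j, k)` coefficient of
`A(hz, z)` is `∑ b α β h^{α₁} h̄^{β₁}` over `|α| = j`, `|β| = k`, and on these index sets `α` is
determined by `α₁` and `β` by `β₁`. Monomials `h^p h̄^q` are linearly independent as functions on
`ℂ`, so this coefficient cannot vanish for every `h`.
-/

open Finset

open Polynomial in
theorem Polynomial.eq_zero_of_forall_eval_ofReal_eq_zero {P : ℂ[X]}
    (h : ∀ x : ℝ, P.eval (x : ℂ) = 0) : P = 0 :=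
  P.eq_zero_of_infinite_isRoot <|
    (Set.infinite_range_of_injective Complex.ofReal_injective).mono <| by
      rintro _ ⟨x, rfl⟩
      exact h x

section InfiniteDomain

variable {R ι κ : Type*} [CommRing R] [IsDomain R] [Infinite R]

open Polynomial in
theorem eq_zero_of_forall_sum_mul_pow_eq_zero {s : Finset ι} {e : ι → ℕ} (he : Set.InjOn e s)
    {a : ι → R} (h : ∀ z : R, ∑ i ∈ s, a i * z ^ e i = 0) : ∀ i ∈ s, a i = 0 := by
  have hP : ∑ i ∈ s, C (a i) * X ^ e i = 0 :=
    Polynomial.funext fun z => by simpa [eval_finsetSum] using h z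
  intro i hi
  have hcoeff := congrArg (coeff · (e i)) hP
  simp only [finsetSum_coeff, coeff_C_mul_X_pow, coeff_zero] at hcoeff
  rwa [sum_eq_single_of_mem i hi fun l hl hli => if_neg fun hel => hli (he hl hi hel.symm),
    if_pos rfl] at hcoeff

theorem eq_zero_of_forall_sum_sum_mul_pow_mul_pow_eq_zero {s : Finset ι} {t : Finset κ}
    {e : ι → ℕ} {f : κ → ℕ} (he : Set.InjOn e s) (hf : Set.InjOn f t) {a : ι → κ → R}
    (h : ∀ z w : R, ∑ i ∈ s, ∑ l ∈ t, a i l * z ^ e i * w ^ f l = 0) :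
    ∀ i ∈ s, ∀ l ∈ t, a i l = 0 := by
  intro i hi
  refine eq_zero_of_forall_sum_mul_pow_eq_zero hf fun w => ?_
  refine eq_zero_of_forall_sum_mul_pow_eq_zero he (a := fun i => ∑ l ∈ t, a i l * w ^ f l)
    (fun z => ?_) i hi
  simpa only [sum_mul, mul_right_comm] using h z w

end InfiniteDomain

open ComplexConjugate Polynomial in
theorem forall_sum_sum_mul_pow_mul_pow_eq_zero_of_conj {ι κ : Type*} {s : Finset ι}
    {t : Finset κ} {e : ι → ℕ} {f : κ → ℕ} {a : ι → κ → ℂ}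
    (h : ∀ z : ℂ, ∑ i ∈ s, ∑ l ∈ t, a i l * z ^ e i * conj z ^ f l = 0) (z w : ℂ) :
    ∑ i ∈ s, ∑ l ∈ t, a i l * z ^ e i * w ^ f l = 0 := by
  -- The sum at `(c + T d, c̄ + T d̄)` is a polynomial in `T` vanishing on `ℝ`, hence at `T = I`,
  -- and `c, d` are chosen so that `(c + I d, c̄ + I d̄) = (z, w)`.
  set c := (z + conj w) / 2
  set d := (z - conj w) / (2 * Complex.I)
  have hP : ∑ i ∈ s, ∑ l ∈ t,
      C (a i l) * (C c + C d * X) ^ e i * (C (conj c) + C (conj d) * X) ^ f l = 0 := by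
    refine eq_zero_of_forall_eval_ofReal_eq_zero fun x => ?_
    simpa [eval_finsetSum] using h (c + d * x)
  have hz : c + d * Complex.I = z := by
    simp only [c, d]; field_simp; ring
  have hw : conj c + conj d * Complex.I = w := by
    simp only [c, d, map_div₀, map_add, map_sub, map_mul, Complex.conj_conj, Complex.conj_I,
      map_ofNat]
    field_simp; ring
  simpa [eval_finsetSum, hz, hw] using congrArg (eval Complex.I) hP

/-- If the homogeneous degree-`m` polynomial
`A(u₁,u₂) = Σ_{|α|+|β|=m, |α|>0, |β|>0} b_{α,β} u'^α ū'^β` has some nonzero coefficient,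
then there is `h ∈ ℂ` such that `z ↦ A(hz, z)` has a nonzero mixed coefficient, i.e.
the coefficient of `z^j z̄^k` (which is `Σ_{α₁+α₂=j, β₁+β₂=k} b_{α,β} h^{α₁} h̄^{β₁}`)
is nonzero for some `j, k > 0` with `j + k = m`. -/
theorem stmt0 (m : ℕ) (b : (ℕ × ℕ) → (ℕ × ℕ) → ℂ)
    (hdeg : ∀ α β : ℕ × ℕ, b α β ≠ 0 →
      α.1 + α.2 + (β.1 + β.2) = m ∧ 0 < α.1 + α.2 ∧ 0 < β.1 + β.2)
    (hne : ∃ α β : ℕ × ℕ, b α β ≠ 0) :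
    ∃ h : ℂ, ∃ j k : ℕ, 0 < j ∧ 0 < k ∧ j + k = m ∧
      (∑ α ∈ range (m+1) ×ˢ range (m+1), ∑ β ∈ range (m+1) ×ˢ range (m+1),
        if α.1 + α.2 = j ∧ β.1 + β.2 = k
        then b α β * h ^ α.1 * (starRingEnd ℂ h) ^ β.1 else 0) ≠ 0 := by
  obtain ⟨α₀, β₀, hb⟩ := hne
  obtain ⟨hm, hj, hk⟩ := hdeg α₀ β₀ hb
  let D (n : ℕ) := (range (m+1) ×ˢ range (m+1)).filter fun α => α.1 + α.2 = n
  have hD (n : ℕ) : Set.InjOn Prod.fst (D n : Set (ℕ × ℕ)) := by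
    intro α hα β hβ h
    simp only [D, mem_coe, mem_filter] at hα hβ
    ext <;> omega
  have hmem (α : ℕ × ℕ) (hα : α.1 + α.2 ≤ m) : α ∈ D (α.1 + α.2) :=
    mem_filter.2 ⟨mem_product.2 ⟨mem_range.2 (by omega), mem_range.2 (by omega)⟩, rfl⟩
  by_contra! hcon
  refine hb <| eq_zero_of_forall_sum_sum_mul_pow_mul_pow_eq_zero (hD _) (hD _)
    (forall_sum_sum_mul_pow_mul_pow_eq_zero_of_conj fun z => ?_)
    α₀ (hmem α₀ (by omega)) β₀ (hmem β₀ (by omega))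
  simpa only [D, sum_filter, ite_and, ite_sum_zero] using hcon z _ _ hj hk hm
end

section
/- Let ρ(z₁,z₂) = Re z₂ + P(z₁)z₂^q + conj(P(z₁)z₂^q) + (higher order), where P(z₁) = Σ_{j+k=p} c_{j,k} z₁^j z̄₁^k is a polynomial in z₁ and z̄₁. If ρ is plurisubharmonic (as a function of (z₁,z₂) ∈ ℂ²) on a neighborhood of 0, then ∂P/∂z̄₁ ≡ 0, i.e. P is a holomorphic polynomial in z₁. -/
open Finset

/-- `P(z₁) = Σ_{j+k=p} c_{j,k} z₁^j z̄₁^k` (indexed by `j`, with `k = p - j`). -/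
noncomputable def Ppoly (p : ℕ) (c : ℕ → ℂ) (z : ℂ) : ℂ :=
  ∑ j ∈ range (p+1), c j * z ^ j * (starRingEnd ℂ z) ^ (p - j)

/-- `ρ(z₁,z₂) = Re z₂ + P(z₁) z₂^q + conj (P(z₁) z₂^q)`. -/
noncomputable def rhoPQ (p q : ℕ) (c : ℕ → ℂ) (z : ℂ × ℂ) : ℝ :=
  z.2.re + 2 * (Ppoly p c z.1 * z.2 ^ q).re

set_option maxHeartbeats 1000000
lemma int_exp (k : ℤ) :
    (∫ θ in (0:ℝ)..(2*Real.pi), Complex.exp ((k:ℂ) * θ * Complex.I)) =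
      if k = 0 then (2*Real.pi : ℂ) else 0 := by
  rcases eq_or_ne k 0 with hk | hk
  · simp [hk]
  · rw [if_neg hk]
    have hc : (k:ℂ) * Complex.I ≠ 0 := by simp [Complex.I_ne_zero, hk]
    have : ∀ θ : ℝ, (k:ℂ) * (θ:ℂ) * Complex.I = ((k:ℂ) * Complex.I) * (θ:ℝ) := by
      intro θ; ring
    simp only [this]
    rw [integral_exp_mul_complex hc]
    have h1 : ((k:ℂ) * Complex.I) * ((2*Real.pi : ℝ):ℂ) = (k:ℂ) * (2 * Real.pi * Complex.I) := by
      push_cast; ring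
    rw [h1, Complex.exp_int_mul_two_pi_mul_I]
    simp

/-- pointwise: t^m * conj t ^ n = r^(m+n) exp((m-n) θ i) for t = r e^{iθ} -/
lemma mono_pt (r : ℝ) (m n : ℕ) (θ : ℝ) :
    ((r:ℂ) * Complex.exp (θ * Complex.I))^m *
      (starRingEnd ℂ ((r:ℂ) * Complex.exp (θ * Complex.I)))^n
    = (r:ℂ)^(m+n) * Complex.exp ((((m:ℤ) - n : ℤ):ℂ) * θ * Complex.I) := by
  have hconj : starRingEnd ℂ ((r:ℂ) * Complex.exp (θ * Complex.I))
      = (r:ℂ) * Complex.exp (-(θ * Complex.I)) := by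
    rw [map_mul, ← Complex.exp_conj]
    congr 1
    · exact Complex.conj_ofReal r
    · rw [map_mul, Complex.conj_ofReal, Complex.conj_I]; ring
  rw [hconj, mul_pow, mul_pow, ← Complex.exp_nat_mul, ← Complex.exp_nat_mul]
  rw [show (r:ℂ)^m * Complex.exp ((m:ℂ) * (θ*Complex.I)) * ((r:ℂ)^n * Complex.exp ((n:ℂ) * -(θ*Complex.I))) = (r:ℂ)^(m+n) * (Complex.exp ((m:ℂ) * (θ*Complex.I)) * Complex.exp ((n:ℂ) * -(θ*Complex.I))) from by rw [pow_add]; ring]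
  rw [← Complex.exp_add]
  congr 1
  push_cast
  ring

lemma int_mono (r : ℝ) (m n : ℕ) :
    (∫ θ in (0:ℝ)..(2*Real.pi),
      ((r:ℂ) * Complex.exp (θ * Complex.I))^m *
        (starRingEnd ℂ ((r:ℂ) * Complex.exp (θ * Complex.I)))^n)
    = if m = n then (2*Real.pi : ℂ) * (r:ℂ)^(2*m) else 0 := by
  simp only [mono_pt]
  rw [intervalIntegral.integral_const_mul, int_exp ((m:ℤ) - n)]
  rcases eq_or_ne m n with h | h
  · subst h
    rw [if_pos (by ring), if_pos rfl]
    ring_nf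
  · have : ((m:ℤ) - n) ≠ 0 := sub_ne_zero.mpr (by exact_mod_cast h)
    rw [if_neg this, if_neg h, mul_zero]
noncomputable def Kco (p q : ℕ) (c : ℕ → ℂ) (a₁ a₂ v₁ v₂ : ℂ) (j α β γ : ℕ) : ℂ :=
  c j * ((j.choose α : ℂ) * a₁^α * v₁^(j-α))
    * (((p-j).choose β : ℂ) * (starRingEnd ℂ a₁)^β * (starRingEnd ℂ v₁)^(p-j-β))
    * ((q.choose γ : ℂ) * a₂^γ * v₂^(q-γ))

lemma expand (p q : ℕ) (c : ℕ → ℂ) (a₁ a₂ v₁ v₂ t : ℂ) :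
    Ppoly p c (a₁ + t*v₁) * (a₂ + t*v₂)^q
    = ∑ j ∈ range (p+1), ∑ γ ∈ range (q+1), ∑ β ∈ range (p-j+1), ∑ α ∈ range (j+1),
        Kco p q c a₁ a₂ v₁ v₂ j α β γ * t^((j-α)+(q-γ)) * (starRingEnd ℂ t)^(p-j-β) := by
  unfold Ppoly Kco
  rw [Finset.sum_mul]
  refine Finset.sum_congr rfl (fun j hj => ?_)
  have hconj : starRingEnd ℂ (a₁ + t*v₁) = starRingEnd ℂ a₁ + starRingEnd ℂ t * starRingEnd ℂ v₁ := by
    rw [map_add, map_mul]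
  rw [hconj, add_pow, add_pow, add_pow]
  simp only [Finset.mul_sum, Finset.sum_mul]
  refine Finset.sum_congr rfl (fun γ hγ => ?_)
  refine Finset.sum_congr rfl (fun β hβ => ?_)
  refine Finset.sum_congr rfl (fun α hα => ?_)
  ring
noncomputable def Tsum (p q : ℕ) (c : ℕ → ℂ) (a₁ a₂ v₁ v₂ : ℂ) (r : ℝ) : ℂ :=
  ∑ j ∈ range (p+1), ∑ γ ∈ range (q+1), ∑ β ∈ range (p-j+1), ∑ α ∈ range (j+1),
    Kco p q c a₁ a₂ v₁ v₂ j α β γ *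
      (if (j-α)+(q-γ) = p-j-β then (r:ℂ)^(2*((j-α)+(q-γ))) else 0)

lemma cont_mono (r : ℝ) (m n : ℕ) (K : ℂ) :
    Continuous (fun θ:ℝ => K * ((r:ℂ) * Complex.exp (θ * Complex.I))^m *
      (starRingEnd ℂ ((r:ℂ) * Complex.exp (θ * Complex.I)))^n) := by
  have ht : Continuous (fun θ:ℝ => (r:ℂ) * Complex.exp (θ * Complex.I)) := by fun_prop
  exact (continuous_const.mul (ht.pow m)).mul ((Complex.continuous_conj.comp ht).pow n)

lemma int_formula (p q : ℕ) (c : ℕ → ℂ) (a₁ a₂ v₁ v₂ : ℂ) (r : ℝ) :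
    (∫ θ in (0:ℝ)..(2*Real.pi),
      ((a₂ + ((r:ℂ) * Complex.exp (θ * Complex.I)) * v₂)
        + 2 * (Ppoly p c (a₁ + ((r:ℂ) * Complex.exp (θ * Complex.I)) * v₁)
            * (a₂ + ((r:ℂ) * Complex.exp (θ * Complex.I)) * v₂)^q)))
    = (2*Real.pi : ℂ) * (a₂ + 2 * Tsum p q c a₁ a₂ v₁ v₂ r) := by
  set t : ℝ → ℂ := fun θ => (r:ℂ) * Complex.exp (θ * Complex.I) with ht
  have hI1 : IntervalIntegrable (fun θ:ℝ => a₂ + t θ * v₂) MeasureTheory.volume 0 (2*Real.pi) := by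
    apply Continuous.intervalIntegrable; fun_prop
  have hI2 : IntervalIntegrable (fun θ:ℝ =>
      2 * (Ppoly p c (a₁ + t θ * v₁) * (a₂ + t θ * v₂)^q)) MeasureTheory.volume 0 (2*Real.pi) := by
    apply Continuous.intervalIntegrable
    unfold Ppoly
    have ht2 : Continuous (fun θ:ℝ => a₁ + ((r:ℂ) * Complex.exp (θ * Complex.I)) * v₁) := by fun_prop
    refine continuous_const.mul (Continuous.mul (continuous_finset_sum _ (fun j _ => ?_)) (by fun_prop))
    exact (continuous_const.mul (ht2.pow j)).mul ((Complex.continuous_conj.comp ht2).pow (p-j))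
  rw [intervalIntegral.integral_add hI1 hI2]
  have h1 : (∫ θ in (0:ℝ)..(2*Real.pi), (a₂ + t θ * v₂)) = (2*Real.pi:ℂ) * a₂ := by
    have hIa : IntervalIntegrable (fun _:ℝ => a₂) MeasureTheory.volume 0 (2*Real.pi) :=
      intervalIntegrable_const
    have hIb : IntervalIntegrable (fun θ:ℝ => t θ * v₂) MeasureTheory.volume 0 (2*Real.pi) := by
      apply Continuous.intervalIntegrable; fun_prop
    rw [intervalIntegral.integral_add hIa hIb, intervalIntegral.integral_const,
      intervalIntegral.integral_mul_const]
    have : (∫ θ in (0:ℝ)..(2*Real.pi), t θ)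
        = ∫ θ in (0:ℝ)..(2*Real.pi), (t θ)^1 * (starRingEnd ℂ (t θ))^0 := by
      congr 1; funext θ; simp
    rw [this, ht]
    rw [int_mono r 1 0]
    simp [Complex.real_smul]
  rw [h1]
  have h2 : (∫ θ in (0:ℝ)..(2*Real.pi),
      2 * (Ppoly p c (a₁ + t θ * v₁) * (a₂ + t θ * v₂)^q))
      = (2*Real.pi:ℂ) * (2 * Tsum p q c a₁ a₂ v₁ v₂ r) := by
    rw [intervalIntegral.integral_const_mul]
    have hrw : ∀ θ:ℝ, Ppoly p c (a₁ + t θ * v₁) * (a₂ + t θ * v₂)^q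
        = ∑ j ∈ range (p+1), ∑ γ ∈ range (q+1), ∑ β ∈ range (p-j+1), ∑ α ∈ range (j+1),
            Kco p q c a₁ a₂ v₁ v₂ j α β γ * (t θ)^((j-α)+(q-γ)) * (starRingEnd ℂ (t θ))^(p-j-β) :=
      fun θ => expand p q c a₁ a₂ v₁ v₂ (t θ)
    simp only [hrw]
    have hcont4 : ∀ (j α β γ : ℕ), Continuous (fun θ:ℝ =>
        Kco p q c a₁ a₂ v₁ v₂ j α β γ * (t θ)^((j-α)+(q-γ)) * (starRingEnd ℂ (t θ))^(p-j-β)) := by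
      intro j α β γ
      have htc : Continuous t := by rw [ht]; fun_prop
      exact (continuous_const.mul (htc.pow _)).mul ((Complex.continuous_conj.comp htc).pow _)
    have hint4 : ∀ (j α β γ : ℕ), IntervalIntegrable (fun θ:ℝ =>
        Kco p q c a₁ a₂ v₁ v₂ j α β γ * (t θ)^((j-α)+(q-γ)) * (starRingEnd ℂ (t θ))^(p-j-β))
        MeasureTheory.volume 0 (2*Real.pi) :=
      fun j α β γ => (hcont4 j α β γ).intervalIntegrable _ _
    have hL1 : ∀ j ∈ range (p+1), IntervalIntegrable (fun θ:ℝ =>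
        ∑ γ ∈ range (q+1), ∑ β ∈ range (p-j+1), ∑ α ∈ range (j+1),
          Kco p q c a₁ a₂ v₁ v₂ j α β γ * (t θ)^((j-α)+(q-γ)) * (starRingEnd ℂ (t θ))^(p-j-β))
        MeasureTheory.volume 0 (2*Real.pi) := by
      intro j _
      apply Continuous.intervalIntegrable
      apply continuous_finset_sum; intro γ _
      apply continuous_finset_sum; intro β _
      apply continuous_finset_sum; intro α _
      exact hcont4 j α β γ
    rw [intervalIntegral.integral_finset_sum hL1]
    unfold Tsum
    simp only [Finset.mul_sum]
    refine Finset.sum_congr rfl (fun j _ => ?_)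
    have hL2 : ∀ γ ∈ range (q+1), IntervalIntegrable (fun θ:ℝ =>
        ∑ β ∈ range (p-j+1), ∑ α ∈ range (j+1),
          Kco p q c a₁ a₂ v₁ v₂ j α β γ * (t θ)^((j-α)+(q-γ)) * (starRingEnd ℂ (t θ))^(p-j-β))
        MeasureTheory.volume 0 (2*Real.pi) := by
      intro γ _
      apply Continuous.intervalIntegrable
      apply continuous_finset_sum; intro β _
      apply continuous_finset_sum; intro α _
      exact hcont4 j α β γ
    rw [intervalIntegral.integral_finset_sum hL2]
    simp only [Finset.mul_sum]
    refine Finset.sum_congr rfl (fun γ _ => ?_)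
    have hL3 : ∀ β ∈ range (p-j+1), IntervalIntegrable (fun θ:ℝ =>
        ∑ α ∈ range (j+1),
          Kco p q c a₁ a₂ v₁ v₂ j α β γ * (t θ)^((j-α)+(q-γ)) * (starRingEnd ℂ (t θ))^(p-j-β))
        MeasureTheory.volume 0 (2*Real.pi) := by
      intro β _
      apply Continuous.intervalIntegrable
      apply continuous_finset_sum; intro α _
      exact hcont4 j α β γ
    rw [intervalIntegral.integral_finset_sum hL3]
    simp only [Finset.mul_sum]
    refine Finset.sum_congr rfl (fun β _ => ?_)
    rw [intervalIntegral.integral_finset_sum (fun α _ => hint4 j α β γ)]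
    simp only [Finset.mul_sum]
    refine Finset.sum_congr rfl (fun α _ => ?_)
    have hpull : (∫ x in (0:ℝ)..(2*Real.pi),
        Kco p q c a₁ a₂ v₁ v₂ j α β γ * (t x)^((j-α)+(q-γ)) * (starRingEnd ℂ (t x))^(p-j-β))
        = Kco p q c a₁ a₂ v₁ v₂ j α β γ *
          ∫ x in (0:ℝ)..(2*Real.pi), (t x)^((j-α)+(q-γ)) * (starRingEnd ℂ (t x))^(p-j-β) := by
      rw [← intervalIntegral.integral_const_mul]
      congr 1; funext x; ring
    rw [hpull, ht]
    rw [int_mono]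
    rcases eq_or_ne ((j-α)+(q-γ)) (p-j-β) with h | h
    · rw [if_pos h, if_pos h]; ring
    · rw [if_neg h, if_neg h]; ring
  rw [h2]
  ring
noncomputable def Esum (p q : ℕ) (c : ℕ → ℂ) (a₁ a₂ v₁ v₂ : ℂ) (r : ℝ) : ℂ :=
  ∑ j ∈ range (p+1), ∑ γ ∈ range (q+1), ∑ β ∈ range (p-j+1), ∑ α ∈ range (j+1),
    Kco p q c a₁ a₂ v₁ v₂ j α β γ *
      (if ((j-α)+(q-γ) = p-j-β ∧ 1 ≤ (j-α)+(q-γ)) then (r:ℂ)^(2*((j-α)+(q-γ))-2) else 0)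

lemma Psum_collapse (p q : ℕ) (c : ℕ → ℂ) (a₁ a₂ v₁ v₂ : ℂ) :
    Ppoly p c a₁ * a₂^q
    = ∑ j ∈ range (p+1), ∑ γ ∈ range (q+1), ∑ β ∈ range (p-j+1), ∑ α ∈ range (j+1),
        Kco p q c a₁ a₂ v₁ v₂ j α β γ * (if (α = j ∧ β = p-j ∧ γ = q) then 1 else 0) := by
  unfold Ppoly
  rw [Finset.sum_mul]
  refine Finset.sum_congr rfl (fun j hj => ?_)
  have h1 : ∀ γ ∈ range (q+1), ∀ β ∈ range (p-j+1), ∀ α ∈ range (j+1),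
      Kco p q c a₁ a₂ v₁ v₂ j α β γ * (if (α = j ∧ β = p-j ∧ γ = q) then 1 else 0)
      = if α = j then (if β = p-j then (if γ = q then Kco p q c a₁ a₂ v₁ v₂ j α β γ else 0) else 0) else 0 := by
    intro γ _ β _ α _
    split_ifs <;> simp_all
  rw [Finset.sum_congr rfl (fun γ hγ => Finset.sum_congr rfl (fun β hβ =>
    Finset.sum_congr rfl (fun α hα => h1 γ hγ β hβ α hα)))]
  rw [Finset.sum_congr rfl (fun γ _ => Finset.sum_congr rfl (fun β _ =>
    Finset.sum_ite_eq' (range (j+1)) j _))]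
  simp only [Finset.mem_range, Nat.lt_succ_self, if_true]
  rw [Finset.sum_congr rfl (fun γ _ => Finset.sum_ite_eq' (range (p-j+1)) (p-j) _)]
  simp only [Finset.mem_range, Nat.lt_succ_self, if_true]
  rw [Finset.sum_ite_eq' (range (q+1)) q _]
  simp only [Finset.mem_range, Nat.lt_succ_self, if_true]
  unfold Kco
  simp only [Nat.choose_self, Nat.sub_self, pow_zero, Nat.cast_one]
  ring

lemma Tsub (p q : ℕ) (c : ℕ → ℂ) (a₁ a₂ v₁ v₂ : ℂ) (r : ℝ) :
    Tsum p q c a₁ a₂ v₁ v₂ r - Ppoly p c a₁ * a₂^q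
    = (r:ℂ)^2 * Esum p q c a₁ a₂ v₁ v₂ r := by
  rw [Psum_collapse p q c a₁ a₂ v₁ v₂]
  unfold Tsum Esum
  simp only [Finset.mul_sum, ← Finset.sum_sub_distrib]
  refine Finset.sum_congr rfl (fun j hj => ?_)
  refine Finset.sum_congr rfl (fun γ hγ => ?_)
  refine Finset.sum_congr rfl (fun β hβ => ?_)
  refine Finset.sum_congr rfl (fun α hα => ?_)
  simp only [mem_range] at hj hγ hβ hα
  have hite : (if (j-α)+(q-γ) = p-j-β then (r:ℂ)^(2*((j-α)+(q-γ))) else 0)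
      - (if (α = j ∧ β = p-j ∧ γ = q) then 1 else 0)
      = (r:ℂ)^2 * (if ((j-α)+(q-γ) = p-j-β ∧ 1 ≤ (j-α)+(q-γ)) then (r:ℂ)^(2*((j-α)+(q-γ))-2) else 0) := by
    split_ifs with h1 h2 h3 h3 h2 h3
    · exfalso; omega
    · rw [show 2*((j-α)+(q-γ)) = 0 from by omega, pow_zero]; ring
    · rw [sub_zero, ← pow_add]; congr 1; omega
    · exfalso; omega
    · exfalso; omega
    · exfalso; omega
    · exfalso; omega
    · ring
  rw [← mul_sub, hite]
  ring
lemma Econt (p q : ℕ) (c : ℕ → ℂ) (a₁ a₂ v₁ v₂ : ℂ) :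
    Continuous (fun r:ℝ => Esum p q c a₁ a₂ v₁ v₂ r) := by
  unfold Esum
  refine continuous_finset_sum _ (fun j _ => continuous_finset_sum _ (fun γ _ =>
    continuous_finset_sum _ (fun β _ => continuous_finset_sum _ (fun α _ => ?_))))
  by_cases h : ((j-α)+(q-γ) = p-j-β ∧ 1 ≤ (j-α)+(q-γ))
  · simp only [if_pos h]
    exact continuous_const.mul (Complex.continuous_ofReal.pow _)
  · simp only [if_neg h, mul_zero]
    exact continuous_const

lemma Eaffine (p q : ℕ) (c : ℕ → ℂ) (a₁ a₂ v₁ : ℂ) (v₂ : ℂ) :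
    Esum p q c a₁ a₂ v₁ v₂ 0 = Esum p q c a₁ a₂ v₁ 0 0
      + v₂ * (Esum p q c a₁ a₂ v₁ 1 0 - Esum p q c a₁ a₂ v₁ 0 0) := by
  unfold Esum
  simp only [Finset.mul_sum, ← Finset.sum_sub_distrib, ← Finset.sum_add_distrib]
  refine Finset.sum_congr rfl (fun j hj => ?_)
  refine Finset.sum_congr rfl (fun γ hγ => ?_)
  refine Finset.sum_congr rfl (fun β hβ => ?_)
  refine Finset.sum_congr rfl (fun α hα => ?_)
  by_cases hc : ((j-α)+(q-γ) = p-j-β ∧ 1 ≤ (j-α)+(q-γ))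
  · simp only [if_pos hc]
    by_cases h2 : 2 ≤ (j-α)+(q-γ)
    · rw [show ((0:ℝ):ℂ)^(2*((j-α)+(q-γ))-2) = 0 from by
        rw [Complex.ofReal_zero, zero_pow (by omega)]]
      ring
    · have hgle : q-γ ≤ 1 := by omega
      rcases Nat.le_one_iff_eq_zero_or_eq_one.mp hgle with h0 | h01
      · unfold Kco; rw [h0]; simp only [pow_zero]; ring
      · unfold Kco; rw [h01]; simp only [pow_one]; ring
  · simp only [if_neg hc, mul_zero]
    ring

lemma Ycompute (p q : ℕ) (hq : 1 ≤ q) (c : ℕ → ℂ) (a₁ a₂ v₁ : ℂ) :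
    Esum p q c a₁ a₂ v₁ 1 0 - Esum p q c a₁ a₂ v₁ 0 0
    = (q:ℂ) * a₂^(q-1) * (starRingEnd ℂ v₁) *
        ∑ j ∈ range (p+1), c j * ((p-j:ℕ):ℂ) * a₁^j * (starRingEnd ℂ a₁)^(p-j-1) := by
  unfold Esum
  simp only [← Finset.sum_sub_distrib]
  rw [Finset.mul_sum]
  refine Finset.sum_congr rfl (fun j hj => ?_)
  simp only [mem_range] at hj
  have h1 : ∀ γ ∈ range (q+1), ∀ β ∈ range (p-j+1), ∀ α ∈ range (j+1),
      (Kco p q c a₁ a₂ v₁ 1 j α β γ *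
        (if ((j-α)+(q-γ) = p-j-β ∧ 1 ≤ (j-α)+(q-γ)) then ((0:ℝ):ℂ)^(2*((j-α)+(q-γ))-2) else 0))
      - (Kco p q c a₁ a₂ v₁ 0 j α β γ *
        (if ((j-α)+(q-γ) = p-j-β ∧ 1 ≤ (j-α)+(q-γ)) then ((0:ℝ):ℂ)^(2*((j-α)+(q-γ))-2) else 0))
      = if α = j then (if β = p-j-1 then (if γ = q-1 then
          (if 1 ≤ p-j then Kco p q c a₁ a₂ v₁ 1 j j (p-j-1) (q-1) else 0) else 0) else 0) else 0 := by
    intro γ hγ β hβ α hα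
    simp only [mem_range] at hγ hβ hα
    by_cases hc : ((j-α)+(q-γ) = p-j-β ∧ 1 ≤ (j-α)+(q-γ))
    · simp only [if_pos hc]
      by_cases h2 : 2 ≤ (j-α)+(q-γ)
      · rw [show ((0:ℝ):ℂ)^(2*((j-α)+(q-γ))-2) = 0 from by
          rw [Complex.ofReal_zero, zero_pow (by omega)]]
        rw [mul_zero, mul_zero, sub_zero]
        split_ifs <;> first | rfl | (exfalso; omega)
      · have hm1 : (j-α)+(q-γ) = 1 := by omega
        rw [show (2*((j-α)+(q-γ))-2) = 0 from by omega, pow_zero, mul_one, mul_one]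
        rcases Nat.le_one_iff_eq_zero_or_eq_one.mp (show q-γ ≤ 1 from by omega) with h0 | h01
        · -- γ = q : terms equal, difference 0; RHS ite: γ = q-1 would need... show RHS 0
          have : Kco p q c a₁ a₂ v₁ 1 j α β γ = Kco p q c a₁ a₂ v₁ 0 j α β γ := by
            unfold Kco; rw [h0]; simp only [pow_zero]
          rw [this, sub_self]
          split_ifs <;> first | rfl | (exfalso; omega)
        · -- q - γ = 1: α = j, γ = q-1, β = p-j-1, 1 ≤ p-j
          have hαj : α = j := by omega
          have hγq : γ = q-1 := by omega
          have hβv : β = p-j-1 := by omega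
          have hpj : 1 ≤ p-j := by omega
          have hz : Kco p q c a₁ a₂ v₁ 0 j α β γ = 0 := by
            unfold Kco; rw [h01]; simp
          rw [hz, sub_zero, if_pos hαj, if_pos hβv, if_pos hγq, if_pos hpj, hαj, hβv, hγq]
    · simp only [if_neg hc, mul_zero, sub_zero]
      split_ifs <;> first | rfl | (exfalso; omega)
  rw [Finset.sum_congr rfl (fun γ hγ => Finset.sum_congr rfl (fun β hβ =>
    Finset.sum_congr rfl (fun α hα => h1 γ hγ β hβ α hα)))]
  rw [Finset.sum_congr rfl (fun γ _ => Finset.sum_congr rfl (fun β _ =>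
    Finset.sum_ite_eq' (range (j+1)) j _))]
  simp only [Finset.mem_range, Nat.lt_succ_self, if_true]
  rw [Finset.sum_congr rfl (fun γ _ => Finset.sum_ite_eq' (range (p-j+1)) (p-j-1) _)]
  simp only [Finset.mem_range, show p-j-1 < p-j+1 from by omega, if_true]
  rw [Finset.sum_ite_eq' (range (q+1)) (q-1) _]
  simp only [Finset.mem_range, show q-1 < q+1 from by omega, if_true]
  by_cases hpj : 1 ≤ p-j
  · rw [if_pos hpj]
    unfold Kco
    rw [Nat.choose_self, show (p-j).choose (p-j-1) = p-j from by
        rw [Nat.choose_symm (by omega : 1 ≤ p-j), Nat.choose_one_right],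
      show q.choose (q-1) = q from by
        rw [Nat.choose_symm (by omega : 1 ≤ q), Nat.choose_one_right]]
    rw [Nat.sub_self, show (p-j)-(p-j-1) = 1 from by omega, show q-(q-1) = 1 from by omega]
    simp only [pow_zero, pow_one, Nat.cast_one, one_pow]
    push_cast [hpj]
    ring
  · rw [if_neg hpj]
    have : p-j = 0 := by omega
    rw [this]
    simp
lemma extract (p : ℕ) (e : ℕ → ℂ) (δ : ℝ) (hδ : 0 < δ)
    (hW : ∀ z : ℂ, ‖z‖ < δ →
      ∑ j ∈ range p, e j * z^j * (starRingEnd ℂ z)^(p-1-j) = 0) :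
    ∀ J < p, e J = 0 := by
  intro J hJ
  set x : ℝ := δ/2 with hx
  have hx0 : 0 < x := by positivity
  have hθ : ∀ θ:ℝ, ∑ j ∈ range p,
      e j * ((x:ℂ) * Complex.exp (θ * Complex.I))^j *
        (starRingEnd ℂ ((x:ℂ) * Complex.exp (θ * Complex.I)))^(p-1-j) = 0 := by
    intro θ
    apply hW
    rw [norm_mul, Complex.norm_exp_ofReal_mul_I, mul_one, Complex.norm_real]
    rw [Real.norm_of_nonneg (le_of_lt hx0)]
    rw [hx]; linarith
  -- multiply by exp(((p-1) - 2J) θ I) and integrate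
  have hzero : (∫ θ in (0:ℝ)..(2*Real.pi),
      (∑ j ∈ range p,
        e j * ((x:ℂ) * Complex.exp (θ * Complex.I))^j *
          (starRingEnd ℂ ((x:ℂ) * Complex.exp (θ * Complex.I)))^(p-1-j)) *
        Complex.exp (((((p:ℤ)-1-2*J):ℤ):ℂ) * θ * Complex.I)) = 0 := by
    have : ∀ θ:ℝ, (∑ j ∈ range p,
        e j * ((x:ℂ) * Complex.exp (θ * Complex.I))^j *
          (starRingEnd ℂ ((x:ℂ) * Complex.exp (θ * Complex.I)))^(p-1-j)) *
        Complex.exp (((((p:ℤ)-1-2*J):ℤ):ℂ) * θ * Complex.I) = 0 := by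
      intro θ; rw [hθ θ, zero_mul]
    simp only [this]
    simp
  have hpt : ∀ j ∈ range p, ∀ θ:ℝ,
      (e j * ((x:ℂ) * Complex.exp (θ * Complex.I))^j *
        (starRingEnd ℂ ((x:ℂ) * Complex.exp (θ * Complex.I)))^(p-1-j)) *
        Complex.exp (((((p:ℤ)-1-2*J):ℤ):ℂ) * θ * Complex.I)
      = (e j * (x:ℂ)^(p-1)) * Complex.exp ((((2*(j:ℤ)-2*J):ℤ):ℂ) * θ * Complex.I) := by
    intro j hj θ
    simp only [mem_range] at hj
    rw [mul_assoc (e j), mono_pt]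
    rw [show j + (p-1-j) = p-1 from by omega]
    have hAB : ((((j:ℤ) - ((p-1-j:ℕ):ℤ)) : ℤ):ℂ) * θ * Complex.I
        + ((((p:ℤ)-1-2*J):ℤ):ℂ) * θ * Complex.I
        = (((2*(j:ℤ)-2*J):ℤ):ℂ) * θ * Complex.I := by
      rw [show ((j:ℤ) - ((p-1-j:ℕ):ℤ)) = 2*(j:ℤ) - ((p:ℤ)-1) from by omega,
        show ((p:ℤ)-1-2*J) = ((p:ℤ)-1) - 2*(J:ℤ) from by ring]
      push_cast; ring
    rw [mul_assoc, mul_assoc, ← Complex.exp_add, hAB, ← mul_assoc]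
  have hsum : (∫ θ in (0:ℝ)..(2*Real.pi),
      (∑ j ∈ range p,
        e j * ((x:ℂ) * Complex.exp (θ * Complex.I))^j *
          (starRingEnd ℂ ((x:ℂ) * Complex.exp (θ * Complex.I)))^(p-1-j)) *
        Complex.exp (((((p:ℤ)-1-2*J):ℤ):ℂ) * θ * Complex.I))
      = ∑ j ∈ range p, (e j * (x:ℂ)^(p-1)) *
          ∫ θ in (0:ℝ)..(2*Real.pi), Complex.exp ((((2*(j:ℤ)-2*J):ℤ):ℂ) * θ * Complex.I) := by
    have h1 : ∀ θ:ℝ, (∑ j ∈ range p,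
        e j * ((x:ℂ) * Complex.exp (θ * Complex.I))^j *
          (starRingEnd ℂ ((x:ℂ) * Complex.exp (θ * Complex.I)))^(p-1-j)) *
        Complex.exp (((((p:ℤ)-1-2*J):ℤ):ℂ) * θ * Complex.I)
        = ∑ j ∈ range p, (e j * (x:ℂ)^(p-1)) *
            Complex.exp ((((2*(j:ℤ)-2*J):ℤ):ℂ) * θ * Complex.I) := by
      intro θ
      rw [Finset.sum_mul]
      exact Finset.sum_congr rfl (fun j hj => hpt j hj θ)
    simp only [h1]
    rw [intervalIntegral.integral_finset_sum (fun j _ => by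
      apply Continuous.intervalIntegrable
      fun_prop)]
    exact Finset.sum_congr rfl (fun j _ =>
      intervalIntegral.integral_const_mul _ _)
  rw [hsum] at hzero
  have heval : ∀ j ∈ range p, (e j * (x:ℂ)^(p-1)) *
      (∫ θ in (0:ℝ)..(2*Real.pi), Complex.exp ((((2*(j:ℤ)-2*J):ℤ):ℂ) * θ * Complex.I))
      = if j = J then (e J * (x:ℂ)^(p-1)) * (2*Real.pi:ℂ) else 0 := by
    intro j _
    rw [int_exp]
    rcases eq_or_ne j J with h | h
    · subst h; rw [if_pos (by omega), if_pos rfl]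
    · rw [if_neg (by omega), if_neg h, mul_zero]
  rw [Finset.sum_congr rfl heval, Finset.sum_ite_eq' (range p) J, if_pos (by simpa using hJ)] at hzero
  have hx1 : (x:ℂ)^(p-1) ≠ 0 := pow_ne_zero _ (by simpa using ne_of_gt hx0)
  have hpi : (2*Real.pi:ℂ) ≠ 0 := by
    simp [Real.pi_ne_zero]
  by_contra he
  exact (mul_ne_zero (mul_ne_zero he hx1) hpi) hzero
/-- if `ρ(z₁,z₂) = Re z₂ + P(z₁)z₂^q + conj(P(z₁)z₂^q)` is plurisubharmonic
near `0` (sub-mean value inequality on every small complex line), then `∂P/∂z̄₁ ≡ 0`,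
i.e. every coefficient `c_{j,k}` with `k = p - j > 0` vanishes. -/
theorem stmt2 (p q : ℕ) (hq : 1 ≤ q) (c : ℕ → ℂ) (ε : ℝ) (hε : 0 < ε)
    (hpsh : ∀ a v : ℂ × ℂ, ‖a‖ < ε → ∀ rr : ℝ, 0 < rr → ‖a‖ + rr * ‖v‖ < ε →
      rhoPQ p q c a ≤ (1 / (2 * Real.pi)) *
        ∫ θ in (0:ℝ)..(2 * Real.pi),
          rhoPQ p q c (a + ((rr : ℂ) * Complex.exp (θ * Complex.I)) • v)) :
    ∀ j < p, c j = 0 := by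
  have hre2 : ∀ z:ℂ, ((2:ℂ)*z).re = 2*z.re := by
    intro z; simp [Complex.mul_re]
  -- Step 1: positivity of Esum at 0
  have key1 : ∀ a₁ a₂ v₁ v₂ : ℂ, ‖((a₁,a₂) : ℂ × ℂ)‖ < ε →
      0 ≤ (Esum p q c a₁ a₂ v₁ v₂ 0).re := by
    intro a₁ a₂ v₁ v₂ ha
    set a : ℂ × ℂ := (a₁, a₂) with hav
    set v : ℂ × ℂ := (v₁, v₂) with hvv
    set δ : ℝ := (ε - ‖a‖)/(‖v‖+1) with hδdef
    have hδ : 0 < δ := div_pos (by linarith) (by positivity)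
    have hle : ∀ r:ℝ, 0 < r → r < δ → 0 ≤ (Esum p q c a₁ a₂ v₁ v₂ r).re := by
      intro r hr hrδ
      have hball : ‖a‖ + r * ‖v‖ < ε := by
        have h1 : r * ‖v‖ ≤ r * (‖v‖+1) := by nlinarith [norm_nonneg v]
        have h2 : r * (‖v‖+1) < δ * (‖v‖+1) := by
          have : (0:ℝ) < ‖v‖+1 := by positivity
          exact mul_lt_mul_of_pos_right hrδ this
        have h3 : δ * (‖v‖+1) = ε - ‖a‖ := by
          rw [hδdef]; field_simp
        linarith
      have H := hpsh a v ha r hr hball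
      -- rewrite the integrand
      have hpt : ∀ θ:ℝ, rhoPQ p q c (a + ((r:ℂ) * Complex.exp (θ * Complex.I)) • v)
          = ((a₂ + ((r:ℂ) * Complex.exp (θ * Complex.I)) * v₂)
              + 2 * (Ppoly p c (a₁ + ((r:ℂ) * Complex.exp (θ * Complex.I)) * v₁)
                * (a₂ + ((r:ℂ) * Complex.exp (θ * Complex.I)) * v₂)^q)).re := by
        intro θ
        unfold rhoPQ
        rw [Complex.add_re, hre2]
        congr 2 <;> simp [hav, hvv, Prod.fst_add, Prod.snd_add, smul_eq_mul]
      rw [intervalIntegral.integral_congr (fun θ _ => hpt θ)] at H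
      have hΦc : Continuous (fun θ:ℝ =>
          ((a₂ + ((r:ℂ) * Complex.exp (θ * Complex.I)) * v₂)
              + 2 * (Ppoly p c (a₁ + ((r:ℂ) * Complex.exp (θ * Complex.I)) * v₁)
                * (a₂ + ((r:ℂ) * Complex.exp (θ * Complex.I)) * v₂)^q))) := by
        have ht2 : Continuous (fun θ:ℝ => a₁ + ((r:ℂ) * Complex.exp (θ * Complex.I)) * v₁) := by
          fun_prop
        have hP : Continuous (fun θ:ℝ =>
            Ppoly p c (a₁ + ((r:ℂ) * Complex.exp (θ * Complex.I)) * v₁)) := by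
          unfold Ppoly
          refine continuous_finset_sum _ (fun j _ => ?_)
          exact (continuous_const.mul (ht2.pow j)).mul ((Complex.continuous_conj.comp ht2).pow (p-j))
        fun_prop
      have hint : (∫ θ in (0:ℝ)..(2*Real.pi),
          (((a₂ + ((r:ℂ) * Complex.exp (θ * Complex.I)) * v₂)
              + 2 * (Ppoly p c (a₁ + ((r:ℂ) * Complex.exp (θ * Complex.I)) * v₁)
                * (a₂ + ((r:ℂ) * Complex.exp (θ * Complex.I)) * v₂)^q)).re))
          = ((2*Real.pi : ℂ) * (a₂ + 2 * Tsum p q c a₁ a₂ v₁ v₂ r)).re := by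
        have hii : IntervalIntegrable (fun θ:ℝ =>
            ((a₂ + ((r:ℂ) * Complex.exp (θ * Complex.I)) * v₂)
              + 2 * (Ppoly p c (a₁ + ((r:ℂ) * Complex.exp (θ * Complex.I)) * v₁)
                * (a₂ + ((r:ℂ) * Complex.exp (θ * Complex.I)) * v₂)^q)))
            MeasureTheory.volume 0 (2*Real.pi) := hΦc.intervalIntegrable _ _
        have hcomm := Complex.reCLM.intervalIntegral_comp_comm hii
        rw [← int_formula p q c a₁ a₂ v₁ v₂ r]
        simpa using hcomm
      rw [hint] at H
      have hπ : (0:ℝ) < 2*Real.pi := by positivity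
      have hrhs : (1 / (2*Real.pi)) * ((2*Real.pi : ℂ) * (a₂ + 2 * Tsum p q c a₁ a₂ v₁ v₂ r)).re
          = (a₂ + 2 * Tsum p q c a₁ a₂ v₁ v₂ r).re := by
        rw [show (2*Real.pi : ℂ) = ((2*Real.pi : ℝ) : ℂ) from by push_cast; ring]
        rw [Complex.re_ofReal_mul]
        field_simp
      rw [hrhs] at H
      have hlhs : rhoPQ p q c a = (a₂ + 2 * (Ppoly p c a₁ * a₂^q)).re := by
        unfold rhoPQ
        rw [Complex.add_re, hre2]
      rw [hlhs] at H
      rw [Complex.add_re, Complex.add_re, hre2, hre2] at H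
      have hP : (Ppoly p c a₁ * a₂^q).re ≤ (Tsum p q c a₁ a₂ v₁ v₂ r).re := by linarith
      have hsub := Tsub p q c a₁ a₂ v₁ v₂ r
      have : (Tsum p q c a₁ a₂ v₁ v₂ r).re - (Ppoly p c a₁ * a₂^q).re
          = r^2 * (Esum p q c a₁ a₂ v₁ v₂ r).re := by
        rw [← Complex.sub_re, hsub, show ((r:ℂ))^2 = ((r^2 : ℝ):ℂ) from by push_cast; ring,
          Complex.re_ofReal_mul]
      nlinarith [this, hP, pow_pos hr 2]
    have htend : Filter.Tendsto (fun r:ℝ => (Esum p q c a₁ a₂ v₁ v₂ r).re)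
        (nhdsWithin 0 (Set.Ioi 0)) (nhds ((Esum p q c a₁ a₂ v₁ v₂ 0).re)) :=
      ((Complex.continuous_re.comp (Econt p q c a₁ a₂ v₁ v₂)).tendsto 0).mono_left
        nhdsWithin_le_nhds
    refine ge_of_tendsto htend ?_
    filter_upwards [Ioo_mem_nhdsGT_of_mem (Set.left_mem_Ico.mpr hδ)] with r hr
    exact hle r hr.1 hr.2
  -- Step 2: the linear coefficient in v₂ must vanish
  have key2 : ∀ a₁ a₂ v₁ : ℂ, ‖((a₁,a₂) : ℂ × ℂ)‖ < ε →
      Esum p q c a₁ a₂ v₁ 1 0 - Esum p q c a₁ a₂ v₁ 0 0 = 0 := by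
    intro a₁ a₂ v₁ ha
    set Y : ℂ := Esum p q c a₁ a₂ v₁ 1 0 - Esum p q c a₁ a₂ v₁ 0 0 with hY
    by_contra hYne
    set X : ℂ := Esum p q c a₁ a₂ v₁ 0 0 with hX
    set k : ℝ := (X.re + 1)/(Complex.normSq Y) with hk
    have hnsq : 0 < Complex.normSq Y := Complex.normSq_pos.mpr hYne
    have h0 := key1 a₁ a₂ v₁ (-(k:ℂ) * (starRingEnd ℂ Y)) ha
    rw [Eaffine p q c a₁ a₂ v₁ _] at h0
    have hcm : (-(k:ℂ) * (starRingEnd ℂ Y)) * Y = ((-(k * Complex.normSq Y) : ℝ) : ℂ) := by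
      rw [mul_assoc, show (starRingEnd ℂ Y) * Y = ((Complex.normSq Y : ℝ):ℂ) from by
        rw [mul_comm, Complex.mul_conj]]
      push_cast; ring
    rw [← hY, ← hX, hcm, Complex.add_re, Complex.ofReal_re] at h0
    rw [hk] at h0
    have : X.re + -((X.re + 1) / Complex.normSq Y * Complex.normSq Y) = -1 := by
      field_simp
      ring
    rw [this] at h0
    linarith
  -- Step 3: conclude W(a₁) = 0 on a small ball
  have key3 : ∀ a₁ : ℂ, ‖a₁‖ < ε/2 →
      ∑ j ∈ range (p+1), c j * ((p-j:ℕ):ℂ) * a₁^j * (starRingEnd ℂ a₁)^(p-j-1) = 0 := by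
    intro a₁ ha₁
    have hnorm : ‖((a₁, ((ε/2:ℝ):ℂ)) : ℂ × ℂ)‖ < ε := by
      rw [Prod.norm_def]
      apply max_lt (by linarith)
      rw [Complex.norm_real, Real.norm_of_nonneg (by linarith)]
      linarith
    have h2 := key2 a₁ ((ε/2:ℝ):ℂ) 1 hnorm
    rw [Ycompute p q hq c a₁ ((ε/2:ℝ):ℂ) 1] at h2
    have hq0 : (q:ℂ) ≠ 0 := Nat.cast_ne_zero.mpr (by omega)
    have ha2 : (((ε/2:ℝ):ℂ))^(q-1) ≠ 0 := pow_ne_zero _ (by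
      simp only [ne_eq, Complex.ofReal_eq_zero]
      linarith)
    have hc1 : (starRingEnd ℂ (1:ℂ)) ≠ 0 := by simp
    rcases mul_eq_zero.mp h2 with h | h
    · rcases mul_eq_zero.mp h with h' | h'
      · rcases mul_eq_zero.mp h' with h'' | h''
        · exact absurd h'' hq0
        · exact absurd h'' ha2
      · exact absurd h' hc1
    · exact h
  -- Step 4: extract coefficients
  intro J hJ
  have hW : ∀ z : ℂ, ‖z‖ < ε/2 →
      ∑ j ∈ range p, (c j * ((p-j:ℕ):ℂ)) * z^j * (starRingEnd ℂ z)^(p-1-j) = 0 := by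
    intro z hz
    have h3 := key3 z hz
    rw [Finset.sum_range_succ] at h3
    simp only [Nat.sub_self, Nat.cast_zero, mul_zero, zero_mul, add_zero] at h3
    rw [← h3]
    refine Finset.sum_congr rfl (fun j hj => ?_)
    simp only [mem_range] at hj
    rw [show p-1-j = p-j-1 from by omega]
  have := extract p (fun j => c j * ((p-j:ℕ):ℂ)) (ε/2) (by linarith) hW J hJ
  have hpJ : ((p-J:ℕ):ℂ) ≠ 0 := Nat.cast_ne_zero.mpr (by omega)
  exact (mul_eq_zero.mp this).resolve_right hpJ
end

section
/- Let R(w) = Re w₃ + Σ_{|α|+|β|=m, |α|,|β|>0}^{η} b_{α,β} w'^α w̄'^β + O(|w₃||w| + |w'|^{η+1}) be a smooth function near 0 in ℂ³, where w' = (w₁,w₂) and the sum runs over mixed multi-indices of total degree between m and η. Let γ(t) = (γ₁(t), γ₂(t), γ₃(t)) be a holomorphic curve with γ(0) = 0. If |R(γ(t))| ≤ C|t|^η for small t, then γ₃ vanishes to order at least η at 0. -/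
open Finset

section Auxiliary

open Asymptotics Nat Filter Complex

private lemma coeff_eq_aux (f : ℂ → ℂ) (p : FormalMultilinearSeries ℂ ℂ ℂ) (x : ℂ)
    (hp : HasFPowerSeriesAt f p x) (n : ℕ) :
    p.coeff n = iteratedDeriv n f x / n ! := by
  obtain ⟨r, hr⟩ := hp
  have h := hr.factorial_smul (1 : ℂ) n
  rw [FormalMultilinearSeries.apply_eq_pow_smul_coeff, one_pow, one_smul] at h
  have h2 : iteratedDeriv n f x = (iteratedFDeriv ℂ n f x) fun _ => 1 := by
    rw [iteratedDeriv_eq_iteratedFDeriv]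
  rw [h2, ← h, nsmul_eq_mul, eq_div_iff (by exact_mod_cast n.factorial_ne_zero)]
  ring

private lemma taylor_approx_aux (f : ℂ → ℂ) (hf : AnalyticAt ℂ f 0) (n : ℕ) :
    (fun t : ℂ => f t - ∑ j ∈ range n, (iteratedDeriv j f 0 / j !) * t ^ j)
      =O[nhds 0] (fun t => ‖t‖ ^ n) := by
  obtain ⟨p, hp⟩ := hf
  have h := hp.isBigO_sub_partialSum_pow n
  simp only [zero_add] at h
  convert h using 2 with t
  congr 1
  unfold FormalMultilinearSeries.partialSum
  refine congrArg _ (Finset.sum_congr rfl fun j hj => ?_)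
  rw [FormalMultilinearSeries.apply_eq_pow_smul_coeff, coeff_eq_aux f p 0 hp, smul_eq_mul,
    mul_comm]

private lemma dft_kill_aux {N : ℕ} {ζ : ℂ} (hζ : IsPrimitiveRoot ζ N) {D : ℕ}
    (hd : ¬ (N ∣ D)) : ∑ j ∈ range N, (ζ ^ D) ^ j = 0 := by
  have hw : ζ ^ D ≠ 1 := fun h => hd ((hζ.pow_eq_one_iff_dvd D).mp h)
  rw [geom_sum_eq hw, ← pow_mul, mul_comm, pow_mul, hζ.pow_eq_one, one_pow, sub_self, zero_div]

private lemma conj_zeta_pow_aux {N : ℕ} (hN : 0 < N) {ζ : ℂ} (hζ : IsPrimitiveRoot ζ N) :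
    (starRingEnd ℂ) ζ = ζ ^ (N - 1) := by
  have hζ0 : ζ ≠ 0 := hζ.ne_zero hN.ne'
  have h1 : ζ ^ (N - 1) * ζ = 1 := by
    rw [← pow_succ, Nat.sub_add_cancel hN, hζ.pow_eq_one]
  have h2 : (starRingEnd ℂ) ζ * ζ = 1 := by
    have habs : ‖ζ‖ = 1 := Complex.norm_eq_one_of_pow_eq_one hζ.pow_eq_one hN.ne'
    rw [mul_comm, Complex.mul_conj, Complex.normSq_eq_norm_sq, habs]
    norm_num
  exact mul_right_cancel₀ hζ0 (h2.trans h1.symm)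

private lemma dft_mono_aux {N k : ℕ} (hN : 0 < N) {ζ : ℂ} (hζ : IsPrimitiveRoot ζ N)
    (p q : ℕ) (r : ℝ) (hne : ¬ (N ∣ ((N-1)*(k+q)+p))) :
    ∑ j ∈ range N, (starRingEnd ℂ) (ζ^j) ^ k *
      (((r:ℂ)*ζ^j)^p * (starRingEnd ℂ) ((r:ℂ)*ζ^j)^q) = 0 := by
  have key : ∀ j ∈ range N, (starRingEnd ℂ) (ζ^j) ^ k *
      (((r:ℂ)*ζ^j)^p * (starRingEnd ℂ) ((r:ℂ)*ζ^j)^q)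
      = ((r:ℂ)^(p+q)) * (ζ ^ ((N-1)*(k+q)+p)) ^ j := by
    intro j _
    rw [map_mul, Complex.conj_ofReal, map_pow, conj_zeta_pow_aux hN hζ]
    ring
  rw [Finset.sum_congr rfl key, ← Finset.mul_sum, dft_kill_aux hζ hne, mul_zero]

private lemma dft_diag_aux {N k : ℕ} (hN : 0 < N) {ζ : ℂ} (hζ : IsPrimitiveRoot ζ N) (r : ℝ) :
    ∑ j ∈ range N, (starRingEnd ℂ) (ζ^j) ^ k * ((r:ℂ)*ζ^j)^k = N * (r:ℂ)^k := by
  have key : ∀ j ∈ range N, (starRingEnd ℂ) (ζ^j) ^ k * ((r:ℂ)*ζ^j)^k = (r:ℂ)^k := by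
    intro j _
    have h2 : (starRingEnd ℂ) (ζ^j) * (ζ^j) = 1 := by
      have habs : ‖ζ^j‖ = 1 := by
        rw [norm_pow, Complex.norm_eq_one_of_pow_eq_one hζ.pow_eq_one hN.ne', one_pow]
      rw [mul_comm, Complex.mul_conj, Complex.normSq_eq_norm_sq, habs]
      norm_num
    calc (starRingEnd ℂ) (ζ^j) ^ k * ((r:ℂ)*ζ^j)^k
        = (r:ℂ)^k * ((starRingEnd ℂ) (ζ^j) * (ζ^j))^k := by ring
      _ = (r:ℂ)^k := by rw [h2, one_pow, mul_one]
  rw [Finset.sum_congr rfl key, Finset.sum_const, card_range, nsmul_eq_mul]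

private lemma not_dvd_aux {N k p q : ℕ} (hN : 0 < N) (h1 : p < q + k) (h2 : q + k < p + N) :
    ¬ (N ∣ (N-1)*(k+q)+p) := by
  rintro ⟨e, he⟩
  have hint : ((N:ℤ) - 1) * (k+q) + p = N * e := by
    have hc : ((N:ℤ)-1) = ((N-1 : ℕ) : ℤ) := by
      rw [Nat.cast_sub hN]; norm_num
    rw [hc]; exact_mod_cast he
  have hdvd : (N:ℤ) ∣ ((q:ℤ) + k - p) := ⟨(k+q) - e, by linarith [hint]⟩
  have := Int.le_of_dvd (by omega) hdvd
  omega

private lemma key_aux {k : ℕ} (hk : 0 < k) (a : ℂ) (S : Finset (ℕ × ℕ)) (c : ℕ × ℕ → ℂ)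
    (hS : ∀ x ∈ S, c x = 0 ∨ (x.1 < x.2 + k ∧ x.2 < x.1 + k))
    (h : (fun t : ℂ => (a * t ^ k).re +
        ∑ x ∈ S, (c x * t ^ x.1 * (starRingEnd ℂ) t ^ x.2).re)
      =O[nhds 0] (fun t => ‖t‖ ^ (k+1))) : a = 0 := by
  set G : ℂ → ℝ := fun t => (a * t ^ k).re +
        ∑ x ∈ S, (c x * t ^ x.1 * (starRingEnd ℂ) t ^ x.2).re with hG
  set N := 2*k+2 with hN
  have hN0 : 0 < N := by omega
  set ζ : ℂ := Complex.exp (2 * Real.pi * I / N) with hζdef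
  have hζ : IsPrimitiveRoot ζ N := Complex.isPrimitiveRoot_exp N hN0.ne'
  have hζabs : ∀ j : ℕ, ‖ζ^j‖ = 1 := fun j => by
    rw [norm_pow, Complex.norm_eq_one_of_pow_eq_one hζ.pow_eq_one hN0.ne', one_pow]
  obtain ⟨C, hC⟩ := h.bound
  rw [Metric.eventually_nhds_iff] at hC
  obtain ⟨δ, hδ, hCb⟩ := hC
  have main : ∀ r : ℝ, ∑ j ∈ range N, (starRingEnd ℂ) (ζ^j)^k * ((G ((r:ℂ)*ζ^j) : ℝ) : ℂ)
      = N * (r:ℂ)^k * (a/2) := by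
    intro r
    have expand : ∀ j ∈ range N, (starRingEnd ℂ) (ζ^j)^k * ((G ((r:ℂ)*ζ^j) : ℝ) : ℂ)
        = (a/2) * ((starRingEnd ℂ) (ζ^j)^k * (((r:ℂ)*ζ^j)^k))
        + ((starRingEnd ℂ) a/2) * ((starRingEnd ℂ) (ζ^j)^k *
            ((((r:ℂ)*ζ^j))^0 * (starRingEnd ℂ) ((r:ℂ)*ζ^j)^k))
        + ∑ x ∈ S, ((c x/2) * ((starRingEnd ℂ) (ζ^j)^k *
            ((((r:ℂ)*ζ^j))^x.1 * (starRingEnd ℂ) ((r:ℂ)*ζ^j)^x.2))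
          + ((starRingEnd ℂ) (c x)/2) * ((starRingEnd ℂ) (ζ^j)^k *
            ((((r:ℂ)*ζ^j))^x.2 * (starRingEnd ℂ) ((r:ℂ)*ζ^j)^x.1))) := by
      intro j _
      set t : ℂ := (r:ℂ)*ζ^j
      have reform : ∀ z : ℂ, ((z.re : ℝ) : ℂ) = (z + (starRingEnd ℂ) z)/2 := by
        intro z; rw [Complex.add_conj]; push_cast; ring
      rw [hG]
      push_cast [Complex.ofReal_sum]
      rw [reform]
      have hterm : ∀ x ∈ S, ((((c x * t ^ x.1 * (starRingEnd ℂ) t ^ x.2).re : ℝ)) : ℂ)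
          = (c x * t ^ x.1 * (starRingEnd ℂ) t ^ x.2
            + (starRingEnd ℂ) (c x) * ((starRingEnd ℂ) t) ^ x.1 * t ^ x.2)/2 := by
        intro x _
        rw [reform]; simp [map_mul, map_pow]
      rw [Finset.sum_congr rfl hterm, mul_add, Finset.mul_sum]
      simp only [map_mul, map_pow, Complex.conj_ofReal]
      congr 1
      · ring
      · exact Finset.sum_congr rfl (fun x _ => by ring)
    rw [Finset.sum_congr rfl expand]
    rw [Finset.sum_add_distrib, Finset.sum_add_distrib, ← Finset.mul_sum, ← Finset.mul_sum]
    rw [Finset.sum_comm]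
    have hA1 : ∑ j ∈ range N, (starRingEnd ℂ) (ζ^j)^k * (((r:ℂ)*ζ^j)^k) = N * (r:ℂ)^k :=
      dft_diag_aux hN0 hζ r
    have hA2 : ∑ j ∈ range N, (starRingEnd ℂ) (ζ^j)^k *
        ((((r:ℂ)*ζ^j))^0 * (starRingEnd ℂ) ((r:ℂ)*ζ^j)^k) = 0 :=
      dft_mono_aux hN0 hζ 0 k r (not_dvd_aux hN0 (by omega) (by omega))
    have hA3 : ∀ x ∈ S, ((c x/2) * (∑ j ∈ range N, (starRingEnd ℂ) (ζ^j)^k *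
            ((((r:ℂ)*ζ^j))^x.1 * (starRingEnd ℂ) ((r:ℂ)*ζ^j)^x.2))
          + ((starRingEnd ℂ) (c x)/2) * (∑ j ∈ range N, (starRingEnd ℂ) (ζ^j)^k *
            ((((r:ℂ)*ζ^j))^x.2 * (starRingEnd ℂ) ((r:ℂ)*ζ^j)^x.1))) = 0 := by
      intro x hx
      rcases hS x hx with hc | ⟨h1, h2⟩
      · simp [hc]
      · rw [dft_mono_aux hN0 hζ x.1 x.2 r (not_dvd_aux hN0 (by omega) (by omega)),
          dft_mono_aux hN0 hζ x.2 x.1 r (not_dvd_aux hN0 (by omega) (by omega))]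
        simp
    have hA3' : ∀ x ∈ S, (∑ j ∈ range N, ((c x/2) * ((starRingEnd ℂ) (ζ^j)^k *
            ((((r:ℂ)*ζ^j))^x.1 * (starRingEnd ℂ) ((r:ℂ)*ζ^j)^x.2))
          + ((starRingEnd ℂ) (c x)/2) * ((starRingEnd ℂ) (ζ^j)^k *
            ((((r:ℂ)*ζ^j))^x.2 * (starRingEnd ℂ) ((r:ℂ)*ζ^j)^x.1)))) = 0 := by
      intro x hx
      rw [Finset.sum_add_distrib, ← Finset.mul_sum, ← Finset.mul_sum]
      exact hA3 x hx
    rw [Finset.sum_congr rfl hA3', hA1, hA2, Finset.sum_const_zero]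
    ring
  have hbnd : ∀ r : ℝ, 0 < r → r < δ → ‖a‖/2 ≤ C * r := by
    intro r hr hrδ
    have habs : ∀ j : ℕ, ‖(r:ℂ) * ζ^j‖ = r := by
      intro j
      rw [norm_mul, hζabs, mul_one, Complex.norm_real, Real.norm_eq_abs, abs_of_pos hr]
    have step : (N:ℝ) * r^k * (‖a‖/2) ≤ (N:ℝ) * (C * r^(k+1)) := by
      calc (N:ℝ) * r^k * (‖a‖/2) = ‖(N:ℂ) * (r:ℂ)^k * (a/2)‖ := by
            rw [norm_mul, norm_mul, norm_pow, norm_div]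
            simp [abs_of_pos hr, Real.pi_pos]
        _ = ‖∑ j ∈ range N, (starRingEnd ℂ) (ζ^j)^k * ((G ((r:ℂ)*ζ^j) : ℝ) : ℂ)‖ := by
            rw [main r]
        _ ≤ ∑ j ∈ range N, ‖(starRingEnd ℂ) (ζ^j)^k * ((G ((r:ℂ)*ζ^j) : ℝ) : ℂ)‖ :=
            norm_sum_le _ _
        _ ≤ ∑ j ∈ range N, C * r^(k+1) := by
            refine Finset.sum_le_sum fun j _ => ?_
            rw [norm_mul, norm_pow, RCLike.norm_conj, hζabs, one_pow, one_mul,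
              Complex.norm_real]
            have hd : dist ((r:ℂ) * ζ^j) 0 < δ := by
              rw [_root_.dist_zero_right, habs]; exact hrδ
            have h5 := hCb hd
            have h6 : ‖r^(k+1)‖ = r^(k+1) := Real.norm_of_nonneg (by positivity)
            rw [habs, h6] at h5
            exact h5
        _ = (N:ℝ) * (C * r^(k+1)) := by
            rw [Finset.sum_const, card_range, nsmul_eq_mul]
    have hNr : (0:ℝ) < (N:ℝ) * r^k := by positivity
    have hfin : (N:ℝ) * r^k * (‖a‖/2) ≤ (N:ℝ) * r^k * (C * r) := by
      calc (N:ℝ) * r^k * (‖a‖/2) ≤ (N:ℝ) * (C * r^(k+1)) := step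
        _ = (N:ℝ) * r^k * (C * r) := by ring
    exact le_of_mul_le_mul_left (by linarith) hNr
  by_contra ha
  have h0 : 0 < ‖a‖ := norm_pos_iff.2 ha
  set r := min (δ/2) (‖a‖/(4*(|C|+1))) with hr
  have hrpos : 0 < r := by positivity
  have hrδ : r < δ := lt_of_le_of_lt (min_le_left _ _) (by linarith)
  have h1 : ‖a‖/2 ≤ C * r := hbnd r hrpos hrδ
  have h2 : C * r ≤ (|C|+1) * r := by
    have : C ≤ |C| + 1 := by cases abs_cases C <;> linarith
    nlinarith
  have h3 : r ≤ ‖a‖/(4*(|C|+1)) := min_le_right _ _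
  have h4 : (|C|+1) * r ≤ ‖a‖/4 := by
    have hC1 : (0:ℝ) < |C| + 1 := by positivity
    rw [div_mul_eq_div_div] at h3
    calc (|C|+1) * r ≤ (|C|+1) * (‖a‖/4/(|C|+1)) := by nlinarith
      _ = ‖a‖/4 := by field_simp
  linarith

end Auxiliary

/-- Let `R(w) = Re w₃ + Σ mixed terms of degree between m and η in (w', w̄')
+ O(|w₃||w| + |w'|^{η+1})` be smooth near `0 ∈ ℂ³`, and `γ` a holomorphic curve through `0`.
If `|R(γ(t))| ≤ C₂ |t|^η` for small `t`, then `γ₃` vanishes to order at least `η` at `0`. -/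
theorem stmt4 (m η : ℕ) (hm : 0 < m) (hmη : m ≤ η)
    (R : ℂ × ℂ × ℂ → ℝ) (hR : ContDiff ℝ (⊤ : ℕ∞) R)
    (Γ : Finset ((ℕ × ℕ) × (ℕ × ℕ))) (b : ((ℕ × ℕ) × (ℕ × ℕ)) → ℂ)
    (hΓ : ∀ x ∈ Γ, 0 < x.1.1 + x.1.2 ∧ 0 < x.2.1 + x.2.2 ∧
      m ≤ x.1.1 + x.1.2 + x.2.1 + x.2.2 ∧ x.1.1 + x.1.2 + x.2.1 + x.2.2 ≤ η)
    (C ε : ℝ) (hε : 0 < ε)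
    (hform : ∀ w : ℂ × ℂ × ℂ, ‖w‖ < ε →
      |R w - (w.2.2.re + ∑ x ∈ Γ,
          (b x * w.1 ^ x.1.1 * (starRingEnd ℂ) w.1 ^ x.2.1 *
            w.2.1 ^ x.1.2 * (starRingEnd ℂ) w.2.1 ^ x.2.2).re)| ≤
        C * (‖w.2.2‖ * ‖w‖ + (‖w.1‖ + ‖w.2.1‖) ^ (η + 1)))
    (γ₁ γ₂ γ₃ : ℂ → ℂ)
    (h₁ : AnalyticAt ℂ γ₁ 0) (h₂ : AnalyticAt ℂ γ₂ 0) (h₃ : AnalyticAt ℂ γ₃ 0)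
    (h10 : γ₁ 0 = 0) (h20 : γ₂ 0 = 0) (h30 : γ₃ 0 = 0)
    (C₂ ε₂ : ℝ) (hε₂ : 0 < ε₂)
    (hbound : ∀ t : ℂ, ‖t‖ < ε₂ →
      |R (γ₁ t, γ₂ t, γ₃ t)| ≤ C₂ * ‖t‖ ^ η) :
    ∀ k < η, iteratedDeriv k γ₃ 0 = 0 := by
  classical
  intro k
  induction k using Nat.strong_induction_on with
  | _ k IH =>
  intro hkη
  rcases Nat.eq_zero_or_pos k with rfl | hk
  · simpa using h30
  set a : ℂ := iteratedDeriv k γ₃ 0 / k.factorial with ha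
  -- small-o helpers
  have powBigO : ∀ {mm nn : ℕ}, mm ≤ nn →
      (fun t : ℂ => ‖t‖^nn) =O[nhds 0] (fun t => ‖t‖^mm) := by
    intro mm nn hmn
    rw [Asymptotics.isBigO_iff]
    refine ⟨1, ?_⟩
    filter_upwards [Metric.ball_mem_nhds (0:ℂ) one_pos] with t ht
    rw [mem_ball_zero_iff] at ht
    rw [Real.norm_of_nonneg (by positivity), Real.norm_of_nonneg (by positivity), one_mul]
    exact pow_le_pow_of_le_one (norm_nonneg t) ht.le hmn
  have reBigO : ∀ {f : ℂ → ℂ} {g : ℂ → ℝ},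
      f =O[nhds 0] g → (fun t => (f t).re) =O[nhds 0] g := by
    intro f g hf
    refine Asymptotics.IsBigO.trans ?_ hf
    rw [Asymptotics.isBigO_iff]
    refine ⟨1, ?_⟩
    filter_upwards with t
    rw [Real.norm_eq_abs, one_mul]
    exact Complex.abs_re_le_norm _
  have hsm : ∀ (f : ℂ → ℂ), AnalyticAt ℂ f 0 → f 0 = 0 →
      f =O[nhds 0] (fun t : ℂ => ‖t‖) := by
    intro f hf hf0
    have h := taylor_approx_aux f hf 1
    simp only [Finset.sum_range_one, iteratedDeriv_zero, hf0, pow_zero, pow_one] at h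
    simpa using h
  -- expansion of γ₃
  have h3' : (fun t : ℂ => γ₃ t - a * t ^ k) =O[nhds 0] (fun t => ‖t‖^(k+1)) := by
    have h := taylor_approx_aux γ₃ h₃ (k+1)
    have hsum : ∀ t : ℂ, ∑ j ∈ range (k+1), (iteratedDeriv j γ₃ 0 / j.factorial) * t ^ j
        = a * t ^ k := by
      intro t
      rw [Finset.sum_eq_single k]
      · intro j hj hjk
        have hjk' : j < k := by
          have := Finset.mem_range.mp hj; omega
        rcases Nat.eq_zero_or_pos j with rfl | hj0
        · simp [h30]
        · rw [IH j hjk' (by omega)]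
          simp
      · intro hcon
        exact absurd (Finset.self_mem_range_succ k) hcon
    refine h.congr (fun t => ?_) (fun _ => rfl)
    rw [hsum]
  have hg1 : γ₁ =O[nhds 0] (fun t : ℂ => ‖t‖) := hsm γ₁ h₁ h10
  have hg2 : γ₂ =O[nhds 0] (fun t : ℂ => ‖t‖) := hsm γ₂ h₂ h20
  have hg3k : γ₃ =O[nhds 0] (fun t : ℂ => ‖t‖^k) := by
    have hak : (fun t : ℂ => a*t^k) =O[nhds 0] (fun t => ‖t‖^k) := by
      rw [Asymptotics.isBigO_iff]
      refine ⟨‖a‖, ?_⟩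
      filter_upwards with t
      rw [norm_mul, norm_pow, Real.norm_of_nonneg (by positivity)]
    have := (h3'.trans (powBigO (by omega))).add hak
    refine this.congr (fun t => by ring) (fun _ => rfl)
  have hg3 : γ₃ =O[nhds 0] (fun t : ℂ => ‖t‖) := by
    refine (hg3k.trans (powBigO (by omega : 1 ≤ k))).congr (fun _ => rfl) (fun t => pow_one _)
  -- the mixed factor functions
  set u : ((ℕ × ℕ) × (ℕ × ℕ)) → ℂ → ℂ := fun x t => γ₁ t ^ x.1.1 * γ₂ t ^ x.1.2 with hu
  set v : ((ℕ × ℕ) × (ℕ × ℕ)) → ℂ → ℂ := fun x t => γ₁ t ^ x.2.1 * γ₂ t ^ x.2.2 with hv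
  have hua : ∀ x, AnalyticAt ℂ (u x) 0 := fun x => (h₁.pow _).mul (h₂.pow _)
  have hva : ∀ x, AnalyticAt ℂ (v x) 0 := fun x => (h₁.pow _).mul (h₂.pow _)
  have hu0 : ∀ x ∈ Γ, u x 0 = 0 := by
    intro x hx
    have hp : 0 < x.1.1 ∨ 0 < x.1.2 := by have := (hΓ x hx).1; omega
    rcases hp with hp | hp <;> simp [hu, h10, h20, zero_pow, hp.ne']
  have hv0 : ∀ x ∈ Γ, v x 0 = 0 := by
    intro x hx
    have hp : 0 < x.2.1 ∨ 0 < x.2.2 := by have := (hΓ x hx).2.1; omega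
    rcases hp with hp | hp <;> simp [hv, h10, h20, zero_pow, hp.ne']
  set cu : ((ℕ × ℕ) × (ℕ × ℕ)) → ℕ → ℂ := fun x p => iteratedDeriv p (u x) 0 / p.factorial with hcu
  set cv : ((ℕ × ℕ) × (ℕ × ℕ)) → ℕ → ℂ := fun x p => iteratedDeriv p (v x) 0 / p.factorial with hcv
  set U : ((ℕ × ℕ) × (ℕ × ℕ)) → ℂ → ℂ := fun x t => ∑ p ∈ range (k+1), cu x p * t ^ p with hU
  set V : ((ℕ × ℕ) × (ℕ × ℕ)) → ℂ → ℂ := fun x t => ∑ p ∈ range (k+1), cv x p * t ^ p with hV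
  have hUa : ∀ x, (fun t => u x t - U x t) =O[nhds 0] (fun t : ℂ => ‖t‖^(k+1)) :=
    fun x => taylor_approx_aux (u x) (hua x) (k+1)
  have hVa : ∀ x, (fun t => v x t - V x t) =O[nhds 0] (fun t : ℂ => ‖t‖^(k+1)) :=
    fun x => taylor_approx_aux (v x) (hva x) (k+1)
  -- product approximation
  have hprod : ∀ x, (fun t => u x t * (starRingEnd ℂ) (v x t)
      - U x t * (starRingEnd ℂ) (V x t)) =O[nhds 0] (fun t : ℂ => ‖t‖^(k+1)) := by
    intro x
    have hvO : (fun t => (starRingEnd ℂ) (v x t)) =O[nhds 0] (fun _ : ℂ => (1:ℝ)) := by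
      have : Filter.Tendsto (fun t => (starRingEnd ℂ) (v x t)) (nhds 0)
          (nhds ((starRingEnd ℂ) (v x 0))) :=
        (Complex.continuous_conj.continuousAt.comp (hva x).continuousAt)
      exact this.isBigO_one ℝ
    have hUO : (fun t => U x t) =O[nhds 0] (fun _ : ℂ => (1:ℝ)) := by
      have hcont : Continuous fun t : ℂ => ∑ p ∈ range (k+1), cu x p * t ^ p :=
        continuous_finset_sum _ fun p _ => continuous_const.mul (continuous_pow p)
      exact ((hcont.tendsto 0).isBigO_one ℝ)
    have hVO : (fun t => (starRingEnd ℂ) (v x t - V x t)) =O[nhds 0]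
        (fun t : ℂ => ‖t‖^(k+1)) := by
      refine Asymptotics.IsBigO.trans ?_ (hVa x)
      rw [Asymptotics.isBigO_iff]
      refine ⟨1, ?_⟩
      filter_upwards with t
      rw [RCLike.norm_conj, one_mul]
    have b1 : (fun t => (u x t - U x t) * (starRingEnd ℂ) (v x t)) =O[nhds 0]
        (fun t : ℂ => ‖t‖^(k+1)) :=
      ((hUa x).mul hvO).congr (fun _ => rfl) (fun t => by ring)
    have b2 : (fun t => U x t * (starRingEnd ℂ) (v x t - V x t)) =O[nhds 0]
        (fun t : ℂ => ‖t‖^(k+1)) :=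
      (hUO.mul hVO).congr (fun _ => rfl) (fun t => by ring)
    refine (b1.add b2).congr (fun t => ?_) (fun _ => rfl)
    simp only [map_sub]
    ring
  -- the curve and the error term
  set w : ℂ → ℂ × ℂ × ℂ := fun t => (γ₁ t, γ₂ t, γ₃ t) with hw
  have hwn : (fun t => ‖w t‖) =O[nhds 0] (fun t : ℂ => ‖t‖) := by
    have hsum3 : (fun t => ‖γ₁ t‖ + (‖γ₂ t‖ + ‖γ₃ t‖)) =O[nhds 0] (fun t : ℂ => ‖t‖) :=
      (hg1.norm_left).add ((hg2.norm_left).add (hg3.norm_left))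
    refine Asymptotics.IsBigO.trans ?_ hsum3
    rw [Asymptotics.isBigO_iff]
    refine ⟨1, ?_⟩
    filter_upwards with t
    rw [Real.norm_of_nonneg (norm_nonneg _), one_mul, Real.norm_of_nonneg (by positivity)]
    rw [hw, Prod.norm_def, Prod.norm_def]
    simp only [max_le_iff]
    constructor
    · nlinarith [norm_nonneg (γ₂ t), norm_nonneg (γ₃ t)]
    constructor
    · nlinarith [norm_nonneg (γ₁ t), norm_nonneg (γ₃ t)]
    · nlinarith [norm_nonneg (γ₁ t), norm_nonneg (γ₂ t)]
  have hwsmall : ∀ᶠ t in nhds (0:ℂ), ‖w t‖ < ε := by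
    have hcont : Filter.Tendsto w (nhds 0) (nhds (w 0)) := by
      apply ContinuousAt.tendsto
      exact h₁.continuousAt.prodMk (h₂.continuousAt.prodMk h₃.continuousAt)
    have hw0 : w 0 = 0 := by simp [hw, h10, h20, h30, Prod.ext_iff]
    rw [hw0] at hcont
    have := hcont (Metric.ball_mem_nhds (0 : ℂ × ℂ × ℂ) hε)
    filter_upwards [this] with t ht
    rwa [Set.mem_preimage, mem_ball_zero_iff] at ht
  -- error term from hform
  have hE : (fun t => R (w t) - ((γ₃ t).re + ∑ x ∈ Γ,
      (b x * γ₁ t ^ x.1.1 * (starRingEnd ℂ) (γ₁ t) ^ x.2.1 *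
        γ₂ t ^ x.1.2 * (starRingEnd ℂ) (γ₂ t) ^ x.2.2).re))
      =O[nhds 0] (fun t : ℂ => ‖t‖^(k+1)) := by
    have hrhs : (fun t => ‖γ₃ t‖ * ‖w t‖
        + (‖γ₁ t‖ + ‖γ₂ t‖)^(η+1))
        =O[nhds 0] (fun t : ℂ => ‖t‖^(k+1)) := by
      have p1 : (fun t => ‖γ₃ t‖ * ‖w t‖) =O[nhds 0]
          (fun t : ℂ => ‖t‖^(k+1)) := by
        have := (hg3k.norm_left.mul hwn)
        refine this.congr (fun t => rfl) (fun t => by rw [← pow_succ])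
      have p2 : (fun t => (‖γ₁ t‖ + ‖γ₂ t‖)^(η+1)) =O[nhds 0]
          (fun t : ℂ => ‖t‖^(k+1)) := by
        have hb : (fun t => ‖γ₁ t‖ + ‖γ₂ t‖) =O[nhds 0]
            (fun t : ℂ => ‖t‖) := by
          have := (hg1.norm_left).add (hg2.norm_left)
          refine this.congr (fun t => rfl)
            (fun _ => rfl)
        exact (hb.pow (η+1)).trans (powBigO (by omega))
      exact p1.add p2
    refine Asymptotics.IsBigO.trans ?_ hrhs
    rw [Asymptotics.isBigO_iff]
    refine ⟨C, ?_⟩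
    filter_upwards [hwsmall] with t ht
    have h5 := hform (w t) ht
    have hnn : (0:ℝ) ≤ ‖γ₃ t‖ * ‖w t‖
        + (‖γ₁ t‖ + ‖γ₂ t‖)^(η+1) := by positivity
    rw [Real.norm_eq_abs, Real.norm_of_nonneg hnn]
    exact h5
  -- the full bound from hbound
  have hF : (fun t => R (w t)) =O[nhds 0] (fun t : ℂ => ‖t‖^(k+1)) := by
    have h1 : (fun t => R (w t)) =O[nhds 0] (fun t : ℂ => ‖t‖^η) := by
      rw [Asymptotics.isBigO_iff]
      refine ⟨C₂, ?_⟩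
      have hev : ∀ᶠ t : ℂ in nhds 0, ‖t‖ < ε₂ := by
        filter_upwards [Metric.ball_mem_nhds (0:ℂ) hε₂] with t ht
        rwa [mem_ball_zero_iff] at ht
      filter_upwards [hev] with t ht
      have h5 := hbound t ht
      rw [Real.norm_eq_abs, Real.norm_of_nonneg (by positivity)]
      exact h5
    exact h1.trans (powBigO (by omega))
  have hre3 : (fun t => (γ₃ t).re - (a*t^k).re) =O[nhds 0] (fun t : ℂ => ‖t‖^(k+1)) := by
    have := reBigO h3'
    refine this.congr (fun t => ?_) (fun _ => rfl)
    rw [Complex.sub_re]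
  have hmix : (fun t => ∑ x ∈ Γ,
      ((b x * γ₁ t ^ x.1.1 * (starRingEnd ℂ) (γ₁ t) ^ x.2.1 *
        γ₂ t ^ x.1.2 * (starRingEnd ℂ) (γ₂ t) ^ x.2.2).re
        - (b x * U x t * (starRingEnd ℂ) (V x t)).re))
      =O[nhds 0] (fun t : ℂ => ‖t‖^(k+1)) := by
    apply Asymptotics.IsBigO.fun_sum
    intro x hx
    have e : ∀ t : ℂ, (b x * γ₁ t ^ x.1.1 * (starRingEnd ℂ) (γ₁ t) ^ x.2.1 *
        γ₂ t ^ x.1.2 * (starRingEnd ℂ) (γ₂ t) ^ x.2.2).re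
        - (b x * U x t * (starRingEnd ℂ) (V x t)).re
        = ((b x) * (u x t * (starRingEnd ℂ) (v x t)
            - U x t * (starRingEnd ℂ) (V x t))).re := by
      intro t
      rw [← Complex.sub_re]
      congr 1
      simp only [hu, hv, map_mul, map_pow]
      ring
    refine (reBigO ((hprod x).const_mul_left (b x))).congr (fun t => (e t).symm) (fun _ => rfl)
  -- rearrangement into monomials
  set S : Finset (ℕ × ℕ) := range (k+1) ×ˢ range (k+1) with hS
  set cc : ℕ × ℕ → ℂ := fun s => ∑ x ∈ Γ, b x * cu x s.1 * (starRingEnd ℂ) (cv x s.2) with hcc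
  have hrearr : ∀ t : ℂ, ∑ x ∈ Γ, (b x * U x t * (starRingEnd ℂ) (V x t)).re
      = ∑ s ∈ S, (cc s * t^s.1 * (starRingEnd ℂ) t^s.2).re := by
    intro t
    rw [← Complex.re_sum, ← Complex.re_sum]
    congr 1
    have lhs : ∀ x ∈ Γ, b x * U x t * (starRingEnd ℂ) (V x t)
        = ∑ s ∈ S, b x * cu x s.1 * (starRingEnd ℂ) (cv x s.2) * t^s.1
            * (starRingEnd ℂ) t^s.2 := by
      intro x _
      rw [hU, hV, map_sum, mul_assoc, Finset.sum_mul_sum, Finset.mul_sum, hS,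
        Finset.sum_product]
      refine Finset.sum_congr rfl fun p _ => ?_
      rw [Finset.mul_sum]
      refine Finset.sum_congr rfl fun q _ => ?_
      simp only [map_mul, map_pow]
      ring
    rw [Finset.sum_congr rfl lhs, Finset.sum_comm]
    refine Finset.sum_congr rfl fun s _ => ?_
    rw [hcc]
    rw [Finset.sum_mul, Finset.sum_mul]
  have hScond : ∀ s ∈ S, cc s = 0 ∨ (s.1 < s.2 + k ∧ s.2 < s.1 + k) := by
    intro s hs
    rw [hS, Finset.mem_product, Finset.mem_range, Finset.mem_range] at hs
    by_cases hcase : s.1 < s.2 + k ∧ s.2 < s.1 + k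
    · exact Or.inr hcase
    · left
      have hor : (s.1 = k ∧ s.2 = 0) ∨ (s.1 = 0 ∧ s.2 = k) := by omega
      rw [hcc]
      refine Finset.sum_eq_zero fun x hx => ?_
      rcases hor with ⟨e1, e2⟩ | ⟨e1, e2⟩
      · have : cv x 0 = 0 := by
          simp [hcv, iteratedDeriv_zero, hv0 x hx]
        rw [e2, this, map_zero, mul_zero]
      · have : cu x 0 = 0 := by
          simp [hcu, iteratedDeriv_zero, hu0 x hx]
        rw [e1, this, mul_zero, zero_mul]
  -- assemble
  have hGbig : (fun t : ℂ => (a * t ^ k).re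
      + ∑ s ∈ S, (cc s * t ^ s.1 * (starRingEnd ℂ) t ^ s.2).re)
      =O[nhds 0] (fun t : ℂ => ‖t‖^(k+1)) := by
    have decomp : ∀ t : ℂ, (a * t ^ k).re
        + ∑ s ∈ S, (cc s * t ^ s.1 * (starRingEnd ℂ) t ^ s.2).re
        = R (w t)
          - (R (w t) - ((γ₃ t).re + ∑ x ∈ Γ,
            (b x * γ₁ t ^ x.1.1 * (starRingEnd ℂ) (γ₁ t) ^ x.2.1 *
              γ₂ t ^ x.1.2 * (starRingEnd ℂ) (γ₂ t) ^ x.2.2).re))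
          - ((γ₃ t).re - (a*t^k).re)
          - (∑ x ∈ Γ,
            ((b x * γ₁ t ^ x.1.1 * (starRingEnd ℂ) (γ₁ t) ^ x.2.1 *
              γ₂ t ^ x.1.2 * (starRingEnd ℂ) (γ₂ t) ^ x.2.2).re
              - (b x * U x t * (starRingEnd ℂ) (V x t)).re)) := by
      intro t
      rw [← hrearr t, Finset.sum_sub_distrib]
      ring
    exact (((hF.sub hE).sub hre3).sub hmix).congr (fun t => (decomp t).symm) (fun _ => rfl)
  have hazero : a = 0 := key_aux hk a S cc hScond hGbig
  rw [ha, div_eq_zero_iff] at hazero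
  rcases hazero with h | h
  · exact h
  · exact absurd h (by exact_mod_cast k.factorial_ne_zero)
end

section
/- Let r : ℂ³ → ℝ be smooth with r(z) = Re z₃ + Σ_{m ≤ |α|+|β| ≤ η, |α|>0, |β|>0} a_{α,β} z'^α z̄'^β + O(|z₃||z| + |z'|^{η+1}), and let Γ = {(α,β) : a_{α,β} ≠ 0}, Γ_L the set of (α,β) ∈ Γ with (α₁+β₁, α₂+β₂) on the Newton polygon L. Then r(z) = Re z₃ + Σ_{Γ_L} a_{α,β} z'^α z̄'^β + E₂(z) with |E₂(z)| ≤ C(|z₃||z| + Σ_{ν=1}^N Σ_{l=q_{ν−1}}^{q_ν} |z₁|^{⌊t_l⌋+1}|z₂|^l + |z₂|^{m+1}) for z near 0. -/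
open Finset

lemma my_add_pow_le {a b : ℝ} (ha : 0 ≤ a) (hb : 0 ≤ b) (n : ℕ) :
    (a + b) ^ n ≤ 2 ^ n * (a ^ n + b ^ n) := by
  have h1 : a + b ≤ 2 * max a b := by
    rcases le_total a b with h | h
    · simp [max_eq_right h]; linarith
    · simp [max_eq_left h]; linarith
  have h2 : (a + b) ^ n ≤ (2 * max a b) ^ n :=
    pow_le_pow_left₀ (by positivity) h1 n
  have h3 : max a b ^ n ≤ a ^ n + b ^ n := by
    rcases le_total a b with h | h
    · simp [max_eq_right h]; positivity
    · simp [max_eq_left h]; positivity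
  calc (a + b) ^ n ≤ (2 * max a b) ^ n := h2
    _ = 2 ^ n * max a b ^ n := mul_pow _ _ _
    _ ≤ 2 ^ n * (a ^ n + b ^ n) := mul_le_mul_of_nonneg_left h3 (by positivity)

set_option maxHeartbeats 1000000 in
/-- Proposition 2.8: if
`r(z) = Re z₃ + Σ_{Γ} a_{α,β} z'^α z̄'^β + O(|z₃||z| + |z'|^{η+1})` with all terms mixed of
degree between `m` and `η`, and `Γ_L` is the subset of `Γ` whose exponents
`(α₁+β₁, α₂+β₂)` lie on the Newton polygon `L`, then
`r(z) = Re z₃ + Σ_{Γ_L} a_{α,β} z'^α z̄'^β + E₂(z)` with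
`|E₂(z)| ≤ C'(|z₃||z| + Σ_ν Σ_{l=q_{ν−1}}^{q_ν} |z₁|^{⌊t_l⌋+1}|z₂|^l + |z₂|^{m+1})`. -/
theorem stmt19 (N m η : ℕ) (hN : 0 < N) (hm : 0 < m) (hη : 0 < η) (hmη : m ≤ η)
    (p q : ℕ → ℕ) (e lam : ℕ → ℝ)
    (hp0 : p 0 = η) (hq0 : q 0 = 0) (hpN : p N = 0) (hqN : q N = m)
    (hpos : ∀ ν, 1 ≤ ν → ν ≤ N → 0 < e ν ∧ 0 < lam ν)
    (hline : ∀ ν, 1 ≤ ν → ν ≤ N →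
      (p (ν-1) : ℝ) / e ν + (q (ν-1) : ℝ) / lam ν = 1 ∧
      (p ν : ℝ) / e ν + (q ν : ℝ) / lam ν = 1)
    (hmono : ∀ ν, ν < N → p (ν+1) < p ν ∧ q ν < q (ν+1))
    (t : ℕ → ℝ) (ht0 : t 0 = (η : ℝ))
    (htdef : ∀ l ν, 1 ≤ ν → ν ≤ N → q (ν-1) < l → l ≤ q ν →
      t l = e ν * (1 - (l : ℝ) / lam ν))
    (r : ℂ × ℂ × ℂ → ℝ) (hr : ContDiff ℝ (⊤ : ℕ∞) r)
    (Γ ΓL : Finset ((ℕ × ℕ) × (ℕ × ℕ))) (a : ((ℕ × ℕ) × (ℕ × ℕ)) → ℂ)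
    (hΓ : ∀ x ∈ Γ, 0 < x.1.1 + x.1.2 ∧ 0 < x.2.1 + x.2.2 ∧
      m ≤ x.1.1 + x.1.2 + x.2.1 + x.2.2 ∧ x.1.1 + x.1.2 + x.2.1 + x.2.2 ≤ η)
    (habove : ∀ x ∈ Γ, ∀ ν, 1 ≤ ν → ν ≤ N →
      1 ≤ ((x.1.1 + x.2.1 : ℕ) : ℝ) / e ν + ((x.1.2 + x.2.2 : ℕ) : ℝ) / lam ν)
    (hΓL : ∀ x, x ∈ ΓL ↔ x ∈ Γ ∧ ∃ ν, 1 ≤ ν ∧ ν ≤ N ∧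
      ((x.1.1 + x.2.1 : ℕ) : ℝ) / e ν + ((x.1.2 + x.2.2 : ℕ) : ℝ) / lam ν = 1)
    (C ε : ℝ) (hε : 0 < ε)
    (hform : ∀ z : ℂ × ℂ × ℂ, ‖z‖ < ε →
      |r z - (z.2.2.re + ∑ x ∈ Γ,
          (a x * z.1 ^ x.1.1 * (starRingEnd ℂ) z.1 ^ x.2.1 *
            z.2.1 ^ x.1.2 * (starRingEnd ℂ) z.2.1 ^ x.2.2).re)| ≤
        C * (‖z.2.2‖ * ‖z‖ + (‖z.1‖ + ‖z.2.1‖) ^ (η + 1))) :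
    ∃ C' ε' : ℝ, 0 < C' ∧ 0 < ε' ∧ ∀ z : ℂ × ℂ × ℂ, ‖z‖ < ε' →
      |r z - (z.2.2.re + ∑ x ∈ ΓL,
          (a x * z.1 ^ x.1.1 * (starRingEnd ℂ) z.1 ^ x.2.1 *
            z.2.1 ^ x.1.2 * (starRingEnd ℂ) z.2.1 ^ x.2.2).re)| ≤
        C' * (‖z.2.2‖ * ‖z‖ +
          (∑ ν ∈ Finset.Icc 1 N, ∑ l ∈ Finset.Icc (q (ν-1)) (q ν),
            ‖z.1‖ ^ Int.toNat (⌊t l⌋ + 1) * ‖z.2.1‖ ^ l) +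
          ‖z.2.1‖ ^ (m + 1)) := by
  classical
  set A := ∑ x ∈ Γ, ‖a x‖ with hA
  have hA0 : 0 ≤ A := Finset.sum_nonneg fun x _ => norm_nonneg _
  set C₀ : ℝ := max C 0 with hC₀
  have hC₀0 : 0 ≤ C₀ := le_max_right _ _
  have hΓLsub : ΓL ⊆ Γ := fun x hx => ((hΓL x).1 hx).1
  -- e 1 = η
  have he1pos : 0 < e 1 := (hpos 1 le_rfl hN).1
  have he1 : e 1 = (η : ℝ) := by
    have h1 := (hline 1 le_rfl hN).1
    simp only [Nat.sub_self, hp0, hq0, Nat.cast_zero, zero_div, add_zero] at h1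
    field_simp at h1
    linarith
  -- finding the edge containing l
  have hfind : ∀ n, n ≤ N → ∀ l, 1 ≤ l → l ≤ q n →
      ∃ ν, 1 ≤ ν ∧ ν ≤ n ∧ q (ν-1) < l ∧ l ≤ q ν := by
    intro n
    induction n with
    | zero => intro _ l hl hlq; rw [hq0] at hlq; omega
    | succ n ih =>
      intro hn l hl hlq
      by_cases h : l ≤ q n
      · obtain ⟨ν, h1, h2, h3, h4⟩ := ih (by omega) l hl h
        exact ⟨ν, h1, by omega, h3, h4⟩
      · exact ⟨n + 1, by omega, le_rfl, by simpa using Nat.lt_of_not_le h, hlq⟩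
  refine ⟨C₀ * 2 ^ (η + 2) + A + 1, min ε 1, by positivity, by positivity, ?_⟩
  intro z hz
  have hzε : ‖z‖ < ε := lt_of_lt_of_le hz (min_le_left _ _)
  have hz1' : ‖z‖ ≤ 1 := le_of_lt (lt_of_lt_of_le hz (min_le_right _ _))
  have hz1 : ‖z.1‖ ≤ 1 := by
    have := norm_fst_le z
    linarith
  have hz2 : ‖z.2.1‖ ≤ 1 := by
    have h1 := norm_snd_le z
    have h2 := norm_fst_le z.2
    linarith
  set D := ∑ ν ∈ Finset.Icc 1 N, ∑ l ∈ Finset.Icc (q (ν-1)) (q ν),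
      ‖z.1‖ ^ Int.toNat (⌊t l⌋ + 1) * ‖z.2.1‖ ^ l with hD
  have hD0 : 0 ≤ D := Finset.sum_nonneg fun ν _ => Finset.sum_nonneg fun l _ => by positivity
  have hsummand : ∀ ν, 1 ≤ ν → ν ≤ N → ∀ l, q (ν-1) ≤ l → l ≤ q ν →
      ‖z.1‖ ^ Int.toNat (⌊t l⌋ + 1) * ‖z.2.1‖ ^ l ≤ D := by
    intro ν h1 h2 l h3 h4
    calc ‖z.1‖ ^ Int.toNat (⌊t l⌋ + 1) * ‖z.2.1‖ ^ l
        ≤ ∑ l ∈ Finset.Icc (q (ν-1)) (q ν),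
            ‖z.1‖ ^ Int.toNat (⌊t l⌋ + 1) * ‖z.2.1‖ ^ l :=
          Finset.single_le_sum
            (f := fun l => ‖z.1‖ ^ Int.toNat (⌊t l⌋ + 1) * ‖z.2.1‖ ^ l)
            (fun i _ => by positivity) (Finset.mem_Icc.2 ⟨h3, h4⟩)
      _ ≤ D := Finset.single_le_sum
          (f := fun ν => ∑ l ∈ Finset.Icc (q (ν-1)) (q ν),
            ‖z.1‖ ^ Int.toNat (⌊t l⌋ + 1) * ‖z.2.1‖ ^ l)
          (fun i _ => Finset.sum_nonneg fun j _ => by positivity)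
          (Finset.mem_Icc.2 ⟨h1, h2⟩)
  set S := D + ‖z.2.1‖ ^ (m + 1) with hS
  have hS0 : 0 ≤ S := by positivity
  -- strictness off the polygon
  have hstrict : ∀ x ∈ Γ \ ΓL, ∀ ν, 1 ≤ ν → ν ≤ N →
      1 < ((x.1.1 + x.2.1 : ℕ) : ℝ) / e ν + ((x.1.2 + x.2.2 : ℕ) : ℝ) / lam ν := by
    intro x hx ν h1 h2
    have hmem := Finset.mem_sdiff.1 hx
    refine lt_of_le_of_ne (habove x hmem.1 ν h1 h2) fun h => ?_
    exact hmem.2 ((hΓL x).2 ⟨hmem.1, ν, h1, h2, h.symm⟩)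
  -- key monomial bound
  have hkey : ∀ x ∈ Γ \ ΓL,
      ‖z.1‖ ^ (x.1.1 + x.2.1) * ‖z.2.1‖ ^ (x.1.2 + x.2.2) ≤ S := by
    intro x hx
    set k := x.1.1 + x.2.1 with hk
    set l := x.1.2 + x.2.2 with hl
    by_cases hlm : l ≤ m
    · have hν : ∃ ν, 1 ≤ ν ∧ ν ≤ N ∧ q (ν-1) ≤ l ∧ l ≤ q ν ∧ t l < (k : ℝ) := by
        rcases Nat.eq_zero_or_pos l with h0 | h0
        · refine ⟨1, le_rfl, hN, by simp [hq0, h0], by omega, ?_⟩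
          have hst := hstrict x hx 1 le_rfl hN
          rw [← hk, ← hl, h0] at hst
          simp only [Nat.cast_zero, zero_div, add_zero] at hst
          rw [h0, ht0, ← he1]
          exact (one_lt_div he1pos).1 hst
        · obtain ⟨ν, h1, h2, h3, h4⟩ := hfind N le_rfl l h0 (by omega)
          have hst := hstrict x hx ν h1 h2
          rw [← hk, ← hl] at hst
          have heν : 0 < e ν := (hpos ν h1 h2).1
          have ht : t l = e ν * (1 - (l : ℝ) / lam ν) := htdef l ν h1 h2 h3 h4
          refine ⟨ν, h1, h2, le_of_lt h3, h4, ?_⟩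
          rw [ht]
          have : 1 - (l : ℝ) / lam ν < (k : ℝ) / e ν := by linarith
          calc e ν * (1 - (l : ℝ) / lam ν) < e ν * ((k : ℝ) / e ν) :=
                mul_lt_mul_of_pos_left this heν
            _ = (k : ℝ) := by field_simp
      obtain ⟨ν, h1, h2, h3, h4, h5⟩ := hν
      have hkge : Int.toNat (⌊t l⌋ + 1) ≤ k := by
        have hfl : ⌊t l⌋ < (k : ℤ) := Int.floor_lt.2 (by exact_mod_cast h5)
        omega
      calc ‖z.1‖ ^ k * ‖z.2.1‖ ^ l
          ≤ ‖z.1‖ ^ Int.toNat (⌊t l⌋ + 1) * ‖z.2.1‖ ^ l := by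
            apply mul_le_mul_of_nonneg_right _ (by positivity)
            exact pow_le_pow_of_le_one (norm_nonneg _) hz1 hkge
        _ ≤ D := hsummand ν h1 h2 l h3 h4
        _ ≤ S := le_add_of_nonneg_right (by positivity)
    · calc ‖z.1‖ ^ k * ‖z.2.1‖ ^ l
          ≤ 1 * ‖z.2.1‖ ^ (m + 1) := by
            apply mul_le_mul
            · exact pow_le_one₀ (norm_nonneg _) hz1
            · exact pow_le_pow_of_le_one (norm_nonneg _) hz2 (by omega)
            · positivity
            · exact zero_le_one
        _ = ‖z.2.1‖ ^ (m + 1) := one_mul _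
        _ ≤ S := le_add_of_nonneg_left hD0
  -- term bound
  set f := fun x : (ℕ × ℕ) × (ℕ × ℕ) =>
    (a x * z.1 ^ x.1.1 * (starRingEnd ℂ) z.1 ^ x.2.1 *
      z.2.1 ^ x.1.2 * (starRingEnd ℂ) z.2.1 ^ x.2.2).re with hf
  have hterm : ∀ x ∈ Γ \ ΓL, |f x| ≤ ‖a x‖ * S := by
    intro x hx
    have h1 : |f x| ≤ ‖a x‖ *
        (‖z.1‖ ^ (x.1.1 + x.2.1) * ‖z.2.1‖ ^ (x.1.2 + x.2.2)) := by
      refine le_trans (Complex.abs_re_le_norm _) (le_of_eq ?_)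
      simp only [norm_mul, norm_pow, Complex.norm_conj, pow_add]
      ring
    refine h1.trans (mul_le_mul_of_nonneg_left (hkey x hx) (norm_nonneg _))
  -- sum splitting
  have hsplit : ∑ x ∈ ΓL, f x = ∑ x ∈ Γ, f x - ∑ x ∈ Γ \ ΓL, f x := by
    rw [Finset.sum_sdiff_eq_sub hΓLsub]; ring
  have hsumbound : |∑ x ∈ Γ \ ΓL, f x| ≤ A * S := by
    calc |∑ x ∈ Γ \ ΓL, f x| ≤ ∑ x ∈ Γ \ ΓL, |f x| := Finset.abs_sum_le_sum_abs _ _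
      _ ≤ ∑ x ∈ Γ \ ΓL, ‖a x‖ * S := Finset.sum_le_sum hterm
      _ = (∑ x ∈ Γ \ ΓL, ‖a x‖) * S := (Finset.sum_mul _ _ _).symm
      _ ≤ A * S := by
          apply mul_le_mul_of_nonneg_right _ hS0
          exact Finset.sum_le_sum_of_subset_of_nonneg (Finset.sdiff_subset)
            (fun i _ _ => norm_nonneg _)
  -- pieces of the old error
  have hX : ‖z.1‖ ^ (η + 1) ≤ D := by
    have hmem1 : (0 : ℕ) ∈ Finset.Icc (q (1-1)) (q 1) := by
      simp [hq0]
    have ht0' : Int.toNat (⌊t 0⌋ + 1) = η + 1 := by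
      rw [ht0]; rw [Int.floor_natCast]; omega
    have := hsummand 1 le_rfl hN 0 (by simp [hq0]) (Nat.zero_le _)
    rw [ht0', pow_zero, mul_one] at this
    exact this
  have hY : ‖z.2.1‖ ^ (η + 1) ≤ ‖z.2.1‖ ^ (m + 1) :=
    pow_le_pow_of_le_one (norm_nonneg _) hz2 (by omega)
  -- conclude
  have hold := hform z hzε
  have hold₀ : |r z - (z.2.2.re + ∑ x ∈ Γ, f x)| ≤
      C₀ * (‖z.2.2‖ * ‖z‖ + (‖z.1‖ + ‖z.2.1‖) ^ (η + 1)) := by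
    refine hold.trans (mul_le_mul_of_nonneg_right (le_max_left _ _) (by positivity))
  have hpow : (‖z.1‖ + ‖z.2.1‖) ^ (η + 1) ≤
      2 ^ (η + 1) * (‖z.1‖ ^ (η + 1) + ‖z.2.1‖ ^ (η + 1)) :=
    my_add_pow_le (norm_nonneg _) (norm_nonneg _) _
  have hchain : |r z - (z.2.2.re + ∑ x ∈ ΓL, f x)| ≤
      C₀ * (‖z.2.2‖ * ‖z‖) + C₀ * 2 ^ (η + 1) * (2 * S) + A * S := by
    have h1 : |r z - (z.2.2.re + ∑ x ∈ ΓL, f x)| ≤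
        |r z - (z.2.2.re + ∑ x ∈ Γ, f x)| + |∑ x ∈ Γ \ ΓL, f x| := by
      rw [hsplit]
      have : r z - (z.2.2.re + (∑ x ∈ Γ, f x - ∑ x ∈ Γ \ ΓL, f x)) =
          (r z - (z.2.2.re + ∑ x ∈ Γ, f x)) + ∑ x ∈ Γ \ ΓL, f x := by ring
      rw [this]; exact abs_add_le _ _
    have hXY : ‖z.1‖ ^ (η + 1) + ‖z.2.1‖ ^ (η + 1) ≤ 2 * S := by
      have h2 : ‖z.1‖ ^ (η + 1) ≤ S := hX.trans (le_add_of_nonneg_right (by positivity))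
      have h3 : ‖z.2.1‖ ^ (η + 1) ≤ S := hY.trans (le_add_of_nonneg_left hD0)
      linarith
    have h2 : |r z - (z.2.2.re + ∑ x ∈ Γ, f x)| ≤
        C₀ * (‖z.2.2‖ * ‖z‖) + C₀ * 2 ^ (η + 1) * (2 * S) := by
      have h4 := mul_le_mul_of_nonneg_left
        (hpow.trans (mul_le_mul_of_nonneg_left hXY (by positivity))) hC₀0
      have h5 : C₀ * (‖z.2.2‖ * ‖z‖ + (‖z.1‖ + ‖z.2.1‖) ^ (η + 1))
          = C₀ * (‖z.2.2‖ * ‖z‖)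
            + C₀ * ((‖z.1‖ + ‖z.2.1‖) ^ (η + 1)) := by ring
      have h6 : C₀ * (2 ^ (η + 1) * (2 * S)) = C₀ * 2 ^ (η + 1) * (2 * S) := by ring
      linarith [hold₀]
    linarith [hsumbound]
  have hT0 : 0 ≤ ‖z.2.2‖ * ‖z‖ := by positivity
  calc |r z - (z.2.2.re + ∑ x ∈ ΓL, f x)|
      ≤ C₀ * (‖z.2.2‖ * ‖z‖) + C₀ * 2 ^ (η + 1) * (2 * S) + A * S := hchain
    _ ≤ (C₀ * 2 ^ (η + 2) + A + 1) * (‖z.2.2‖ * ‖z‖ + S) := by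
        have h2 : C₀ * 2 ^ (η + 1) * (2 * S) = C₀ * 2 ^ (η + 2) * S := by ring
        rw [h2]
        have hpow1 : (1:ℝ) ≤ 2 ^ (η + 2) := by
          calc (1:ℝ) = 1 ^ (η + 2) := (one_pow _).symm
            _ ≤ 2 ^ (η + 2) := pow_le_pow_left₀ zero_le_one (by norm_num) _
        have hPC : C₀ ≤ C₀ * 2 ^ (η + 2) := le_mul_of_one_le_right hC₀0 hpow1
        have h3 : C₀ * (‖z.2.2‖ * ‖z‖) ≤
            C₀ * 2 ^ (η + 2) * (‖z.2.2‖ * ‖z‖) :=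
          mul_le_mul_of_nonneg_right hPC hT0
        have h4 : (0:ℝ) ≤ A * (‖z.2.2‖ * ‖z‖) := mul_nonneg hA0 hT0
        nlinarith [h3, h4, hT0, hS0]
    _ = (C₀ * 2 ^ (η + 2) + A + 1) *
        (‖z.2.2‖ * ‖z‖ + D + ‖z.2.1‖ ^ (m+1)) := by
        rw [hS]; ring
end
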